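/- arXiv:2304.04693 — 5 statements merged into one kernel-verified Lean document; each statement's English description precedes it below -/
import Mathlib

section
/- Let d ≥ 1 and 0 ≤ t ≤ d−1, and let Γ = Γ_{t,d}. If a ℤ₂-symmetric graph (G,*) with |V(G)| ≥ 2d is Γ-rigid in ℝ^d, then |E(G)| ≥ d·|V(G)| − 2·min{ C(t+1,2) + C(d−t,2), C(d+1,2) − C(t+1,2) − C(d−t,2) }, where C(a,2) denotes the binomial coefficient 'a choose 2'. -/
open Matrix

/-! ### Frameworks and infinitesimal rigidity -/

/-- An infinitesimal motion of the framework given by the graph `G` restricted to the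
vertex set `W`, realised by `p` in `ℝ^d`. -/
def IsMotion {V : Type*} (d : ℕ) (G : SimpleGraph V) (W : Set V)
    (p q : V → Fin d → ℝ) : Prop :=
  ∀ u ∈ W, ∀ v ∈ W, G.Adj u v → (p u - p v) ⬝ᵥ (q u - q v) = 0

/-- A trivial infinitesimal motion: `q = S ∘ p + c` on `W` for a skew-symmetric `S`. -/
def IsTrivialMotion {V : Type*} (d : ℕ) (W : Set V) (p q : V → Fin d → ℝ) : Prop :=
  ∃ (S : Matrix (Fin d) (Fin d) ℝ) (c : Fin d → ℝ), Sᵀ = -S ∧ ∀ u ∈ W, q u = S *ᵥ p u + c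

/-- The framework on vertex set `W` with edges those of `G` inside `W`, realised by `p`,
is infinitesimally rigid. -/
def IsInfRigid {V : Type*} (d : ℕ) (G : SimpleGraph V) (W : Set V)
    (p : V → Fin d → ℝ) : Prop :=
  ∀ q : V → Fin d → ℝ, IsMotion d G W p q → IsTrivialMotion d W p q

/-- `σ` is a free involution on `X`, i.e. a vertex pairing on `X`. -/
structure IsVertexPairing {V : Type*} (X : Set V) (σ : V → V) : Prop where
  mapsTo : ∀ x ∈ X, σ x ∈ X
  invol : ∀ x ∈ X, σ (σ x) = x
  free : ∀ x ∈ X, σ x ≠ x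

/-- A non-adjacent vertex pairing of the graph `G`. -/
def IsNonAdjPairing {V : Type*} (G : SimpleGraph V) (X : Set V) (σ : V → V) : Prop :=
  IsVertexPairing X σ ∧ ∀ x ∈ X, ¬ G.Adj x (σ x)

/-- `(G, σ)` is a `ℤ₂`-symmetric graph: `σ` is a free involutive automorphism of `G`
with `u (σ u)` never an edge. -/
def IsZ2SymGraph {V : Type*} (G : SimpleGraph V) (σ : V → V) : Prop :=
  (∀ x, σ (σ x) = x) ∧ (∀ x, σ x ≠ x) ∧ (∀ u v, G.Adj u v ↔ G.Adj (σ u) (σ v)) ∧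
    ∀ x, ¬ G.Adj x (σ x)

/-- `γ` generates a point group of `ℝ^d` of order two: it is orthogonal, an involution
and not the identity. -/
def IsPointGroupInvolution {d : ℕ} (γ : Matrix (Fin d) (Fin d) ℝ) : Prop :=
  γᵀ * γ = 1 ∧ γ * γ = 1 ∧ γ ≠ 1

/-- The diagonal matrix `I_{t,d}` whose first `t` diagonal entries are `1` and whose
remaining `d - t` diagonal entries are `-1`; it generates the point group `Γ_{t,d}`. -/
def Itd (t d : ℕ) : Matrix (Fin d) (Fin d) ℝ :=
  Matrix.diagonal fun i => if (i : ℕ) < t then (1 : ℝ) else -1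

/-- `p` is `Γ`-symmetric with respect to the vertex pairing `σ : X → X`, where `Γ` is
generated by `γ`. -/
def IsGammaSym {V : Type*} {d : ℕ} (X : Set V) (σ : V → V)
    (γ : Matrix (Fin d) (Fin d) ℝ) (p : V → Fin d → ℝ) : Prop :=
  ∀ x ∈ X, p (σ x) = γ *ᵥ p x

/-- `(G|_W, σ)` is `Γ`-rigid in `ℝ^d`, where `Γ` is the point group generated by `γ`:
some `Γ`-symmetric realisation is infinitesimally rigid. -/
def GammaRigid {V : Type*} (d : ℕ) (G : SimpleGraph V) (W X : Set V) (σ : V → V)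
    (γ : Matrix (Fin d) (Fin d) ℝ) : Prop :=
  ∃ p : V → Fin d → ℝ, IsGammaSym X σ γ p ∧ IsInfRigid d G W p

/-- The set `X_W = (X ∩ W) ∩ (X ∩ W)*`. -/
def pairedPart {V : Type*} (X : Set V) (σ : V → V) (W : Set V) : Set V :=
  (X ∩ W) ∩ (σ '' (X ∩ W))

/-- The simple graph `G/uv` obtained from `G` by contracting `v` onto `u`. -/
def contractEdge {V : Type*} (G : SimpleGraph V) (u v : V) : SimpleGraph V :=
  SimpleGraph.fromRel fun a b =>
    a ≠ v ∧ b ≠ v ∧ (G.Adj a b ∨ (a = u ∧ G.Adj v b) ∨ (b = u ∧ G.Adj a v))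

/-- The row of the rigidity matrix indexed by an (unordered) edge `e`, viewed as the
linear functional `q ↦ (p u - p v) ⬝ᵥ (q u - q v)`. -/
def rigidityRow {V : Type*} (d : ℕ) (p : V → Fin d → ℝ) (e : Sym2 V)
    (q : V → Fin d → ℝ) : ℝ :=
  Sym2.lift ⟨fun u v => (p u - p v) ⬝ᵥ (q u - q v), fun u v => by
    show (p u - p v) ⬝ᵥ (q u - q v) = (p v - p u) ⬝ᵥ (q v - q u)
    rw [show p u - p v = -(p v - p u) from (neg_sub _ _).symm,
      show q u - q v = -(q v - q u) from (neg_sub _ _).symm,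
      neg_dotProduct, dotProduct_neg, neg_neg]⟩ e

/-- The rigidity matrix `R(G,p)` is row-independent. -/
def RowIndependent {V : Type*} (d : ℕ) (G : SimpleGraph V) (p : V → Fin d → ℝ) : Prop :=
  LinearIndependent ℝ fun e : G.edgeSet => rigidityRow d p e.1

/-- The graph obtained from `G` by splitting `u'` from `u` along `C₁` (deleting `D₁`)
and then splitting `v'` from `v` along `C₂` (deleting `D₂`).  The new vertices are
`u' = Sum.inr 0` and `v' = Sum.inr 1`. -/
def doubleSplit {V : Type*} (G : SimpleGraph V) (u v : V) (C₁ D₁ C₂ D₂ : Set V) :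
    SimpleGraph (V ⊕ Fin 2) :=
  SimpleGraph.fromRel fun a b =>
    (∃ s t : V, a = Sum.inl s ∧ b = Sum.inl t ∧ G.Adj s t ∧
        ¬(s = u ∧ t ∈ D₁) ∧ ¬(t = u ∧ s ∈ D₁) ∧ ¬(s = v ∧ t ∈ D₂) ∧ ¬(t = v ∧ s ∈ D₂)) ∨
    (∃ z : V, a = Sum.inr 0 ∧ b = Sum.inl z ∧ (z ∈ C₁ ∪ D₁ ∨ z = u)) ∨
    (∃ z : V, a = Sum.inr 1 ∧ b = Sum.inl z ∧ (z ∈ C₂ ∪ D₂ ∨ z = v))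

/-! ### Simplicial multicomplexes -/

/-- The vertex set `V(S)` of a simplicial multicomplex. -/
def complexVerts {V : Type*} [DecidableEq V] (S : Multiset (Finset V)) : Finset V :=
  S.toFinset.sup id

/-- The edge set `E(S)`: all 2-element subsets of facets. -/
def complexEdges {V : Type*} [DecidableEq V] (S : Multiset (Finset V)) :
    Finset (Finset V) :=
  S.toFinset.biUnion fun F => Finset.powersetCard 2 F

/-- Adjacency in the graph `G(S)` of a simplicial multicomplex. -/
def complexAdj {V : Type*} (S : Multiset (Finset V)) (a b : V) : Prop :=
  a ≠ b ∧ ∃ F ∈ S, a ∈ F ∧ b ∈ F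

/-- The graph `G(S)` of a simplicial multicomplex. -/
def complexGraph {V : Type*} (S : Multiset (Finset V)) : SimpleGraph V :=
  SimpleGraph.fromRel fun a b => ∃ F ∈ S, a ∈ F ∧ b ∈ F

/-- A simplicial `k`-multicomplex: a multiset of `(k+1)`-element sets. -/
def IsMultiComplex {V : Type*} (k : ℕ) (S : Multiset (Finset V)) : Prop :=
  ∀ F ∈ S, F.card = k + 1

/-- `F` belongs to the boundary `∂S`: it is a `k`-set contained in an odd number of
facets of `S`, counted with multiplicity. -/
def inBoundary {V : Type*} [DecidableEq V] (k : ℕ) (S : Multiset (Finset V))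
    (F : Finset V) : Prop :=
  F.card = k ∧ (S.countP fun U => F ⊆ U) % 2 = 1

instance {V : Type*} [DecidableEq V] (k : ℕ) (S : Multiset (Finset V)) (F : Finset V) :
    Decidable (inBoundary k S F) :=
  inferInstanceAs (Decidable (_ ∧ _))

/-- A simplicial `k`-cycle: a `k`-multicomplex with empty boundary. -/
def IsSimplicialCycle {V : Type*} [DecidableEq V] (k : ℕ)
    (S : Multiset (Finset V)) : Prop :=
  IsMultiComplex k S ∧ ∀ F : Finset V, ¬ inBoundary k S F

/-- A simplicial `k`-circuit: a nonempty simplicial `k`-cycle, no nonempty proper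
sub-multiset of which is a simplicial `k`-cycle. -/
def IsSimplicialCircuit {V : Type*} [DecidableEq V] (k : ℕ)
    (S : Multiset (Finset V)) : Prop :=
  IsSimplicialCycle k S ∧ S ≠ 0 ∧
    ∀ T : Multiset (Finset V), T ≤ S → T ≠ 0 → T ≠ S → ¬ IsSimplicialCycle k T

/-- A trivial simplicial `k`-circuit: two copies of a single `(k+1)`-set. -/
def IsTrivialCircuit {V : Type*} (S : Multiset (Finset V)) : Prop :=
  ∃ F : Finset V, S = {F, F}

/-- The image multiset `T* = {F* : F ∈ T}` of a multicomplex under a vertex map. -/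
def starM {V W : Type*} [DecidableEq W] (f : V → W) (T : Multiset (Finset V)) :
    Multiset (Finset W) :=
  T.map (Finset.image f)

/-- `σ` is a free simplicial involution of the multicomplex `S`. -/
def IsFreeSimplicialInvolution {V : Type*} [DecidableEq V] (S : Multiset (Finset V))
    (σ : V → V) : Prop :=
  (∀ v ∈ complexVerts S, σ (σ v) = v) ∧ starM σ S = S ∧
    ∀ F : Finset V, F.Nonempty → (∃ U ∈ S, F ⊆ U) → F.image σ ≠ F

/-- A `ℤ₂`-symmetric `k`-cycle. -/
def IsZ2SymCycle {V : Type*} [DecidableEq V] (k : ℕ) (S : Multiset (Finset V))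
    (σ : V → V) : Prop :=
  IsSimplicialCycle k S ∧ IsFreeSimplicialInvolution S σ

/-- A `ℤ₂`-irreducible `k`-cycle: a nonempty `ℤ₂`-symmetric `k`-cycle, no nonempty
proper `σ`-invariant sub-multiset of which is a simplicial `k`-cycle. -/
def IsZ2IrreducibleCycle {V : Type*} [DecidableEq V] (k : ℕ) (S : Multiset (Finset V))
    (σ : V → V) : Prop :=
  IsZ2SymCycle k S σ ∧ S ≠ 0 ∧
    ∀ T : Multiset (Finset V), T ≤ S → T ≠ 0 → T ≠ S → starM σ T = T →
      ¬ IsSimplicialCycle k T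

/-- A trivial `ℤ₂`-irreducible `k`-cycle: two vertex-disjoint trivial simplicial
`k`-circuits interchanged by `σ`. -/
def IsTrivialZ2Irreducible {V : Type*} [DecidableEq V] (S : Multiset (Finset V))
    (σ : V → V) : Prop :=
  ∃ F : Finset V, S = {F, F, F.image σ, F.image σ} ∧ Disjoint F (F.image σ)

/-- The contraction `S/uv` of the multicomplex `S` (contracting `v` onto `u`). -/
def contractC {V : Type*} [DecidableEq V] (S : Multiset (Finset V)) (u v : V) :
    Multiset (Finset V) :=
  (S.filter fun U => ¬(u ∈ U ∧ v ∈ U)).map fun U =>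
    if v ∈ U then insert u (U.erase v) else U

/-- The canonical bijection `γ` from `Ast({x,y}) ∩ Ast({x*,y*})` to `(S/xy)/x*y*`,
as a map on facets. -/
def gammaFun {V : Type*} [DecidableEq V] (x y : V) (σ : V → V) (U : Finset V) :
    Finset V :=
  if y ∈ U then insert x (U.erase y)
  else if σ y ∈ U then insert (σ x) (U.erase (σ y)) else U

/-- `Ast({x,y}) ∩ Ast({x*,y*})`: the facets of `S` containing neither `{x,y}` nor
`{x*,y*}`. -/
def doubleAst {V : Type*} [DecidableEq V] (S : Multiset (Finset V)) (x y : V)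
    (σ : V → V) : Multiset (Finset V) :=
  S.filter fun U => ¬(x ∈ U ∧ y ∈ U) ∧ ¬(σ x ∈ U ∧ σ y ∈ U)

/-- `Sᵢ† = {K ⊆ V(Sᵢ) : |K| = k+1, {x,y} ⊆ K, K - x ∈ ∂Sᵢ, K - y ∈ ∂Sᵢ}`. -/
def fogDagger {V : Type*} [DecidableEq V] (k : ℕ) (Si : Multiset (Finset V))
    (x y : V) : Finset (Finset V) :=
  (complexVerts Si).powerset.filter fun K =>
    K.card = k + 1 ∧ x ∈ K ∧ y ∈ K ∧
      inBoundary k Si (K.erase x) ∧ inBoundary k Si (K.erase y)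

/-- `Sᵢ⁺ = Sᵢ ∪ Sᵢ† ∪ (Sᵢ†)*`. -/
def fogPlus {V : Type*} [DecidableEq V] (k : ℕ) (Si : Multiset (Finset V)) (x y : V)
    (σ : V → V) : Multiset (Finset V) :=
  Si ∪ (fogDagger k Si x y).val ∪ ((fogDagger k Si x y).image (Finset.image σ)).val

/-- The boundary complex `B_k` of the `(k+1)`-dimensional crosspolytope: its facets are
the transversals of the pairs `{(i,0),(i,1)}`. -/
def crossComplex (k : ℕ) : Multiset (Finset (Fin (k + 1) × Fin 2)) :=
  (Finset.univ : Finset (Fin (k + 1) → Fin 2)).val.map fun ε =>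
    Finset.univ.image fun i => (i, ε i)

/-- The graph `G(B_k)` of the `(k+1)`-dimensional crosspolytope: all pairs of vertices
are adjacent except antipodal ones. -/
def crossGraph (k : ℕ) : SimpleGraph (Fin (k + 1) × Fin 2) :=
  SimpleGraph.fromRel fun a b => a.1 ≠ b.1

/-- The antipodal vertex pairing of `G(B_k)`. -/
def antipode (k : ℕ) : Fin (k + 1) × Fin 2 → Fin (k + 1) × Fin 2 := fun a => (a.1, a.2 + 1)

/-- A `k`-pseudomanifold: a simplicial `k`-complex in which every `(k-1)`-face lies in
exactly two facets, and which is strongly connected. -/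
def IsPseudomanifold {V : Type*} [DecidableEq V] (k : ℕ)
    (S : Multiset (Finset V)) : Prop :=
  S.Nodup ∧ (∀ F ∈ S, F.card = k + 1) ∧
    (∀ F : Finset V, F.card = k → (∃ U ∈ S, F ⊆ U) →
      (S.countP fun U => F ⊆ U) = 2) ∧
    ∀ U ∈ S, ∀ W ∈ S,
      Relation.ReflTransGen (fun A B => A ∈ S ∧ B ∈ S ∧ (A ∩ B).card = k) U W

/-!
The involution `q ↦ γ ∘ q ∘ σ` of the velocity assignments `V → ℝ^d` has `ν`-eigenspaces
(`ν = ±1`) of dimension `d |V| / 2` each, since a `ν`-symmetric assignment is determined freely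
by its values on one vertex of each `σ`-orbit. On such assignments the row of `σ e` is `ν` times
the row of `e`, so only one edge from each edge orbit matters, i.e. `|E| / 2` rows. By
infinitesimal rigidity the kernel consists of trivial motions, and averaging shows they are
`ν`-symmetric trivial motions, a space of dimension at most `C(t+1,2) + C(d-t,2)` for `ν = 1` and
`C(d+1,2) - C(t+1,2) - C(d-t,2)` for `ν = -1` when `γ = I_{t,d}`. Rank–nullity on each
eigenspace gives `d |V| / 2 ≤ |E| / 2 + dim`.
-/

open Finset

lemma Nat.add_choose_two (m n : ℕ) : (m + n).choose 2 = m.choose 2 + m * n + n.choose 2 := by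
  simp [Nat.add_choose_eq, Finset.Nat.antidiagonal_succ]
  ring

lemma Finset.exists_transversal_of_involution {α : Type*} (s : Finset α) (σ : α → α)
    (hmaps : ∀ x ∈ s, σ x ∈ s) (hinv : ∀ x ∈ s, σ (σ x) = x) (hfree : ∀ x ∈ s, σ x ≠ x) :
    ∃ r : Finset α, 2 * #r = #s ∧ ∀ x ∈ s, (x ∈ r ↔ σ x ∉ r) := by
  classical
  let _ : LinearOrder α := linearOrderOfSTO WellOrderingRel
  have hswap : #{x ∈ s | σ x < x} = #{x ∈ s | x < σ x} := by
    refine card_nbij' σ σ ?_ ?_ ?_ ?_ <;> intro x hx <;>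
      simp only [coe_filter, Set.mem_ofPred_eq] at hx ⊢ <;> simp [hmaps x hx.1, hinv x hx.1, hx]
  have hsplit : {x ∈ s | ¬ x < σ x} = {x ∈ s | σ x < x} :=
    filter_congr fun x hx => by rw [not_lt, (hfree x hx).le_iff_lt]
  have hcard := card_filter_add_card_filter_not (s := s) (fun x => x < σ x)
  rw [hsplit, hswap] at hcard
  refine ⟨{x ∈ s | x < σ x}, by omega, fun x hx => ?_⟩
  simp only [mem_filter, hmaps x hx, hinv x hx, hx, true_and, not_lt]
  exact (hfree x hx).symm.le_iff_lt.symm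

section SymmetricMotions

variable {V : Type*} {d : ℕ}

def symVelocities (σ : V → V) (γ : Matrix (Fin d) (Fin d) ℝ) (ν : ℝ) :
    Submodule ℝ (V → Fin d → ℝ) where
  carrier := {q | ∀ v, q (σ v) = ν • (γ *ᵥ q v)}
  add_mem' hq hq' v := by simp [hq v, hq' v, mulVec_add]
  zero_mem' v := by simp
  smul_mem' c q hq v := by simp [hq v, mulVec_smul, smul_comm c ν]

def symTrivialParams (γ : Matrix (Fin d) (Fin d) ℝ) (ν : ℝ) :
    Submodule ℝ (Matrix (Fin d) (Fin d) ℝ × (Fin d → ℝ)) where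
  carrier := {Sc | Sc.1ᵀ = -Sc.1 ∧ γ * Sc.1 * γ = ν • Sc.1 ∧ γ *ᵥ Sc.2 = ν • Sc.2}
  add_mem' := by
    rintro ⟨S, c⟩ ⟨S', c'⟩ ⟨hS, hSγ, hc⟩ ⟨hS', hSγ', hc'⟩
    refine ⟨?_, ?_, ?_⟩ <;> simp_all [Matrix.mul_add, Matrix.add_mul, mulVec_add, add_comm]
  zero_mem' := by simp
  smul_mem' := by
    rintro a ⟨S, c⟩ ⟨hS, hSγ, hc⟩
    refine ⟨?_, ?_, ?_⟩ <;> simp_all [mulVec_smul, smul_comm a ν]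

def trivialMotion (p : V → Fin d → ℝ) :
    (Matrix (Fin d) (Fin d) ℝ × (Fin d → ℝ)) →ₗ[ℝ] (V → Fin d → ℝ) where
  toFun Sc v := Sc.1 *ᵥ p v + Sc.2
  map_add' _ _ := by ext; simp [add_mulVec]; ring
  map_smul' _ _ := by ext; simp [smul_mulVec]; ring

def rigidityRowLinear (d : ℕ) (p : V → Fin d → ℝ) (e : Sym2 V) :
    (V → Fin d → ℝ) →ₗ[ℝ] ℝ where
  toFun := rigidityRow d p e
  map_add' q q' := by
    induction e using Sym2.ind
    simp only [rigidityRow, Sym2.lift_mk, Pi.add_apply, add_sub_add_comm, dotProduct_add]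
  map_smul' c q := by
    induction e using Sym2.ind
    simp only [rigidityRow, Sym2.lift_mk, Pi.smul_apply, ← smul_sub, dotProduct_smul,
      RingHom.id_apply]

lemma rigidityRow_mk (d : ℕ) (p : V → Fin d → ℝ) (u v : V) (q : V → Fin d → ℝ) :
    rigidityRow d p s(u, v) q = (p u - p v) ⬝ᵥ (q u - q v) :=
  rfl

variable {σ : V → V} {γ : Matrix (Fin d) (Fin d) ℝ} {ν : ℝ} {p q : V → Fin d → ℝ}

lemma rigidityRow_map (hγ : γᵀ * γ = 1) (hp : p ∈ symVelocities σ γ 1)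
    (hq : q ∈ symVelocities σ γ ν) (e : Sym2 V) :
    rigidityRow d p (e.map σ) q = ν * rigidityRow d p e q := by
  induction e using Sym2.ind with
  | _ u v =>
    simp only [Sym2.map_mk, rigidityRow_mk, hp u, hp v, hq u, hq v, one_smul, ← smul_sub,
      ← mulVec_sub, dotProduct_smul, dotProduct_mulVec, ← mulVec_transpose, mulVec_mulVec,
      hγ, one_mulVec, smul_eq_mul]

lemma mem_map_symTrivialParams (hγt : γᵀ = γ) (hγ : γ * γ = 1) (hν : ν * ν = 1)
    (hp : p ∈ symVelocities σ γ 1) (hq : q ∈ symVelocities σ γ ν)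
    (htriv : IsTrivialMotion d Set.univ p q) :
    q ∈ (symTrivialParams γ ν).map (trivialMotion p) := by
  obtain ⟨S, c, hS, hSc⟩ := htriv
  -- average `q = S p + c` with its conjugate `q = ν γ (S γ p + c)` under the symmetry
  have hγSγ : γ * (γ * S * γ) * γ = S := by
    rw [← Matrix.mul_assoc, ← Matrix.mul_assoc, hγ, Matrix.one_mul, Matrix.mul_assoc, hγ,
      Matrix.mul_one]
  refine ⟨((1 / 2 : ℝ) • (S + ν • (γ * S * γ)), (1 / 2 : ℝ) • (c + ν • (γ *ᵥ c))),
    ⟨?_, ?_, ?_⟩, ?_⟩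
  · simp only [transpose_smul, transpose_add, transpose_mul, hγt, hS, Matrix.mul_neg,
      Matrix.neg_mul, Matrix.mul_assoc]
    module
  · simp only [Matrix.mul_smul, Matrix.smul_mul, Matrix.mul_add, Matrix.add_mul, hγSγ, smul_add,
      smul_smul]
    linear_combination (norm := module) ((-1 / 2 : ℝ) • hν) • (γ * S * γ)
  · simp only [mulVec_smul, mulVec_add, mulVec_mulVec, hγ, one_mulVec, smul_add, smul_smul]
    linear_combination (norm := module) ((-1 / 2 : ℝ) • hν) • (γ *ᵥ c)
  · ext v : 1
    have hqv : q v = ν • (γ *ᵥ q (σ v)) := by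
      rw [hq v, mulVec_smul, smul_smul, mulVec_mulVec, hγ, one_mulVec, hν, one_smul]
    have hqσv : q v = ν • ((γ * S * γ) *ᵥ p v) + ν • (γ *ᵥ c) := by
      rw [hqv, hSc (σ v) trivial, hp v, one_smul, mulVec_add, ← mulVec_mulVec, ← mulVec_mulVec,
        smul_add]
    simp only [trivialMotion, LinearMap.coe_mk, AddHom.coe_mk, add_mulVec, smul_mulVec, smul_add]
    linear_combination (norm := module) (-1 / 2 : ℝ) • hSc v trivial - (1 / 2 : ℝ) • hqσv

lemma card_mul_le_two_mul_finrank_symVelocities [Fintype V] (hσ : ∀ v, σ (σ v) = v)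
    (hfree : ∀ v, σ v ≠ v) (hγ : γ * γ = 1) (hν : ν * ν = 1) :
    Fintype.card V * d ≤ 2 * Module.finrank ℝ (symVelocities σ γ ν) := by
  classical
  obtain ⟨r, hr, hrσ⟩ := univ.exists_transversal_of_involution σ (fun v _ => mem_univ _)
    (fun v _ => hσ v) (fun v _ => hfree v)
  let restrict : symVelocities σ γ ν →ₗ[ℝ] (r → Fin d → ℝ) :=
    (LinearMap.pi fun v : r => LinearMap.proj (v : V)) ∘ₗ (symVelocities σ γ ν).subtype
  have hrestrict : Function.Surjective restrict := by
    intro f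
    let F : V → Fin d → ℝ := fun v => if h : v ∈ r then f ⟨v, h⟩ else 0
    refine ⟨⟨fun v => if v ∈ r then F v else ν • (γ *ᵥ F (σ v)), fun v => ?_⟩, ?_⟩
    · by_cases hv : v ∈ r
      · simp [hv, (hrσ v (mem_univ v)).1 hv, hσ]
      · have hσv : σ v ∈ r := by simpa [hv] using (hrσ v (mem_univ v)).not
        simp [hv, hσv, mulVec_smul, smul_smul, mulVec_mulVec, hγ, hν]
    · ext v i
      simp [restrict, F]
  calc Fintype.card V * d = 2 * Module.finrank ℝ (r → Fin d → ℝ) := by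
        rw [Module.finrank_pi_fintype, ← card_univ, ← hr]
        simp [mul_assoc]
    _ ≤ 2 * Module.finrank ℝ (symVelocities σ γ ν) :=
        Nat.mul_le_mul_left 2 (LinearMap.finrank_le_finrank_of_surjective hrestrict)

lemma exists_edge_transversal {G : SimpleGraph V} [Fintype G.edgeSet]
    (hsym : IsZ2SymGraph G σ) :
    ∃ r : Finset (Sym2 V), 2 * #r = #G.edgeFinset ∧
      ∀ e ∈ G.edgeFinset, (e ∈ r ↔ e.map σ ∉ r) := by
  obtain ⟨hσ, hfree, hadj, hnadj⟩ := hsym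
  refine G.edgeFinset.exists_transversal_of_involution _ ?_
    (fun e _ => by simp [Sym2.map_map, hσ]) ?_
  · intro e he
    induction e using Sym2.ind with
    | _ u v => simpa [hadj u v] using he
  · intro e he
    induction e using Sym2.ind with
    | _ u v =>
      rw [Sym2.map_mk, ne_eq, Sym2.eq_iff]
      rintro (⟨hu, -⟩ | ⟨hu, -⟩)
      · exact hfree u hu
      · exact hnadj u (hu ▸ G.mem_edgeFinset.1 he)

theorem card_mul_le_two_mul_finrank_symTrivialParams_add [Fintype V] [DecidableEq V]
    {G : SimpleGraph V} [DecidableRel G.Adj] (hsym : IsZ2SymGraph G σ) (hγt : γᵀ = γ)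
    (hγ : γ * γ = 1) (hrigid : GammaRigid d G Set.univ Set.univ σ γ) (hν : ν * ν = 1) :
    Fintype.card V * d ≤ 2 * Module.finrank ℝ (symTrivialParams γ ν) + #G.edgeFinset := by
  obtain ⟨p, hp, hrig⟩ := hrigid
  replace hp : p ∈ symVelocities σ γ 1 := fun v => by rw [one_smul]; exact hp v trivial
  obtain ⟨r, hr, hrσ⟩ := exists_edge_transversal hsym
  let rows : symVelocities σ γ ν →ₗ[ℝ] (r → ℝ) :=
    LinearMap.pi fun e => rigidityRowLinear d p e ∘ₗ (symVelocities σ γ ν).subtype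
  -- by `rigidityRow_map`, the rows indexed by `r` determine all rows on symmetric velocities
  have hker : (LinearMap.ker rows).map (symVelocities σ γ ν).subtype ≤
      (symTrivialParams γ ν).map (trivialMotion p) := by
    rintro _ ⟨q, hq, rfl⟩
    refine mem_map_symTrivialParams hγt hγ hν hp q.2 (hrig _ fun u _ v _ huv => ?_)
    have hrow : ∀ e ∈ r, rigidityRow d p e q = 0 := fun e he => congrFun hq ⟨e, he⟩
    by_cases he : s(u, v) ∈ r
    · exact hrow _ he
    · have hσe := hrow _ (not_not.1 (mt (hrσ _ (G.mem_edgeFinset.2 huv)).2 he))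
      rw [rigidityRow_map (by rw [hγt, hγ]) hp q.2] at hσe
      exact (mul_eq_zero.1 hσe).resolve_left (left_ne_zero_of_mul_eq_one hν)
  have hrange : Module.finrank ℝ (LinearMap.range rows) ≤ #r :=
    (Submodule.finrank_le _).trans (by simp)
  have hkernel : Module.finrank ℝ (LinearMap.ker rows) ≤
      Module.finrank ℝ (symTrivialParams γ ν) := by
    rw [← Submodule.finrank_map_subtype_eq]
    exact (Submodule.finrank_mono hker).trans (Submodule.finrank_map_le _ _)
  have hrank_nullity := LinearMap.finrank_range_add_finrank_ker rows
  have hdim := card_mul_le_two_mul_finrank_symVelocities hsym.1 hsym.2.1 hγ hν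
  omega

end SymmetricMotions

lemma finrank_symTrivialParams_diagonal_le {d : ℕ} (ε : Fin d → ℝ) (ν : ℝ) :
    Module.finrank ℝ (symTrivialParams (diagonal ε) ν) ≤
      #{x : Fin d × Fin d | x.1 < x.2 ∧ ε x.1 * ε x.2 = ν} + #{i | ε i = ν} := by
  classical
  set P : Finset (Fin d × Fin d) := {x | x.1 < x.2 ∧ ε x.1 * ε x.2 = ν}
  set C : Finset (Fin d) := {i | ε i = ν}
  let entries : symTrivialParams (diagonal ε) ν →ₗ[ℝ] (P → ℝ) × (C → ℝ) :=
    { toFun Sc := (fun x => Sc.1.1 x.1.1 x.1.2, fun i => Sc.1.2 i)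
      map_add' _ _ := rfl
      map_smul' _ _ := rfl }
  -- the symmetry forces `S i j = 0` unless `ε i * ε j = ν`, and `c i = 0` unless `ε i = ν`
  have hinj : Function.Injective entries := by
    rw [← LinearMap.ker_eq_bot, LinearMap.ker_eq_bot']
    rintro ⟨⟨S, c⟩, hS, hSγ, hc⟩ h0
    obtain ⟨hP0, hC0⟩ := Prod.ext_iff.1 h0
    have hupper : ∀ i j, i < j → S i j = 0 := by
      intro i j hij
      by_cases hP : ε i * ε j = ν
      · exact congrFun hP0 ⟨(i, j), by simp [P, hij, hP]⟩
      · have := congrFun₂ hSγ i j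
        simp only [diagonal_mul, mul_diagonal, Matrix.smul_apply, smul_eq_mul] at this
        have hprod : (ε i * ε j - ν) * S i j = 0 := by linear_combination this
        exact (mul_eq_zero.1 hprod).resolve_left (sub_ne_zero.2 hP)
    have hSzero : S = 0 := by
      ext i j
      have hskew := congrFun₂ hS i j
      simp only [transpose_apply, Matrix.neg_apply] at hskew
      rcases lt_trichotomy i j with hij | rfl | hij
      · exact hupper i j hij
      · rw [Matrix.zero_apply]; linarith
      · rw [Matrix.zero_apply, ← neg_eq_zero, ← hskew, hupper j i hij]
    have hczero : c = 0 := by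
      ext i
      by_cases hC : ε i = ν
      · exact congrFun hC0 ⟨i, by simp [C, hC]⟩
      · have := congrFun hc i
        simp only [mulVec_diagonal, Pi.smul_apply, smul_eq_mul] at this
        have hprod : (ε i - ν) * c i = 0 := by linear_combination this
        exact (mul_eq_zero.1 hprod).resolve_left (sub_ne_zero.2 hC)
    simp [hSzero, hczero]
  simpa [Module.finrank_prod, Module.finrank_pi] using
    LinearMap.finrank_le_finrank_of_injective hinj

section Itd

variable {t d : ℕ}

def itdSign (t : ℕ) {d : ℕ} (i : Fin d) : ℝ := if (i : ℕ) < t then 1 else -1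

lemma Itd_eq_diagonal : Itd t d = diagonal (itdSign t) := rfl

lemma Itd_transpose : (Itd t d)ᵀ = Itd t d := diagonal_transpose _

lemma Itd_mul_self : Itd t d * Itd t d = 1 := by
  rw [Itd_eq_diagonal, diagonal_mul_diagonal, ← diagonal_one]
  congr 1
  ext i
  unfold itdSign
  split_ifs <;> norm_num

lemma itdSign_eq_one_iff (i : Fin d) : itdSign t i = 1 ↔ (i : ℕ) < t := by
  unfold itdSign
  split_ifs <;> norm_num [*]

lemma itdSign_eq_neg_one_iff (i : Fin d) : itdSign t i = -1 ↔ t ≤ (i : ℕ) := by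
  unfold itdSign
  split_ifs <;> norm_num <;> omega

lemma itdSign_mul_itdSign_eq_one_iff (i j : Fin d) :
    itdSign t i * itdSign t j = 1 ↔ ((i : ℕ) < t ↔ (j : ℕ) < t) := by
  unfold itdSign
  split_ifs <;> norm_num <;> tauto

lemma itdSign_mul_itdSign_eq_neg_one_iff (i j : Fin d) :
    itdSign t i * itdSign t j = -1 ↔ ¬((i : ℕ) < t ↔ (j : ℕ) < t) := by
  unfold itdSign
  split_ifs <;> norm_num <;> tauto

lemma card_itdSign_eq_one (ht : t ≤ d) : #{i : Fin d | itdSign t i = 1} = t := by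
  simp only [itdSign_eq_one_iff, Fin.card_filter_val_lt, min_eq_right ht]

lemma card_itdSign_eq_neg_one (ht : t ≤ d) : #{i : Fin d | itdSign t i = -1} = d - t := by
  have := card_filter_add_card_filter_not (s := univ) (fun i : Fin d => (i : ℕ) < t)
  simp only [Fin.card_filter_val_lt, min_eq_right ht, not_lt, card_univ, Fintype.card_fin] at this
  simp only [itdSign_eq_neg_one_iff]
  omega

lemma card_itdSign_pairs_eq_one_le (ht : t ≤ d) :
    #{x : Fin d × Fin d | x.1 < x.2 ∧ itdSign t x.1 * itdSign t x.2 = 1} ≤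
      t.choose 2 + (d - t).choose 2 := by
  set A : Finset (Fin d) := {i | itdSign t i = 1}
  set B : Finset (Fin d) := {i | itdSign t i = -1}
  calc #{x : Fin d × Fin d | x.1 < x.2 ∧ itdSign t x.1 * itdSign t x.2 = 1}
      ≤ #({x ∈ A ×ˢ A | x.1 < x.2} ∪ {x ∈ B ×ˢ B | x.1 < x.2}) := by
        refine card_le_card fun x hx => ?_
        simp only [A, B, mem_filter, mem_univ, true_and, mem_union, mem_product,
          itdSign_mul_itdSign_eq_one_iff, itdSign_eq_one_iff, itdSign_eq_neg_one_iff] at hx ⊢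
        omega
    _ ≤ t.choose 2 + (d - t).choose 2 := by
        grw [card_union_le, card_product_filter_lt, card_product_filter_lt,
          card_itdSign_eq_one ht, card_itdSign_eq_neg_one ht]

lemma card_itdSign_pairs_eq_neg_one_le (ht : t ≤ d) :
    #{x : Fin d × Fin d | x.1 < x.2 ∧ itdSign t x.1 * itdSign t x.2 = -1} ≤ t * (d - t) := by
  set A : Finset (Fin d) := {i | itdSign t i = 1}
  set B : Finset (Fin d) := {i | itdSign t i = -1}
  calc #{x : Fin d × Fin d | x.1 < x.2 ∧ itdSign t x.1 * itdSign t x.2 = -1}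
      ≤ #(A ×ˢ B) := by
        refine card_le_card fun x hx => ?_
        simp only [A, B, mem_filter, mem_univ, true_and, mem_product,
          itdSign_mul_itdSign_eq_neg_one_iff, itdSign_eq_one_iff, itdSign_eq_neg_one_iff] at hx ⊢
        omega
    _ = t * (d - t) := by rw [card_product, card_itdSign_eq_one ht, card_itdSign_eq_neg_one ht]

lemma finrank_symTrivialParams_Itd_one_le (ht : t ≤ d) :
    Module.finrank ℝ (symTrivialParams (Itd t d) 1) ≤ (t + 1).choose 2 + (d - t).choose 2 := by
  have hdim := (finrank_symTrivialParams_diagonal_le (itdSign t) 1).trans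
    (add_le_add (card_itdSign_pairs_eq_one_le ht) (card_itdSign_eq_one ht).le)
  have hchoose := Nat.add_choose_two t 1
  simp only [Nat.choose_succ_self, mul_one, add_zero] at hchoose
  rw [Itd_eq_diagonal]
  omega

lemma finrank_symTrivialParams_Itd_neg_one_add_le (ht : t ≤ d) :
    Module.finrank ℝ (symTrivialParams (Itd t d) (-1)) + (t + 1).choose 2 + (d - t).choose 2 ≤
      (d + 1).choose 2 := by
  have hdim := (finrank_symTrivialParams_diagonal_le (itdSign t) (-1)).trans
    (add_le_add (card_itdSign_pairs_eq_neg_one_le ht) (card_itdSign_eq_neg_one ht).le)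
  have hchoose := Nat.add_choose_two (t + 1) (d - t)
  rw [show t + 1 + (d - t) = d + 1 by omega, Nat.add_mul, one_mul] at hchoose
  rw [Itd_eq_diagonal]
  omega

end Itd

theorem statement0_general {V : Type*} [Fintype V] [DecidableEq V] (d t : ℕ)
    (ht : t ≤ d - 1) (G : SimpleGraph V) [DecidableRel G.Adj] (σ : V → V)
    (hsym : IsZ2SymGraph G σ)
    (hrigid : GammaRigid d G Set.univ Set.univ σ (Itd t d)) :
    (d : ℤ) * Fintype.card V -
        2 * min (((t + 1).choose 2 : ℤ) + ((d - t).choose 2 : ℤ))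
          (((d + 1).choose 2 : ℤ) - ((t + 1).choose 2 : ℤ) - ((d - t).choose 2 : ℤ)) ≤
      (G.edgeFinset.card : ℤ) := by
  have htd : t ≤ d := ht.trans (Nat.sub_le d 1)
  have hpos := card_mul_le_two_mul_finrank_symTrivialParams_add hsym Itd_transpose Itd_mul_self
    hrigid (ν := 1) (by norm_num)
  have hneg := card_mul_le_two_mul_finrank_symTrivialParams_add hsym Itd_transpose Itd_mul_self
    hrigid (ν := -1) (by norm_num)
  have hdim_pos := finrank_symTrivialParams_Itd_one_le htd
  have hdim_neg := finrank_symTrivialParams_Itd_neg_one_add_le htd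
  rw [mul_comm (d : ℤ)]
  rcases min_cases (((t + 1).choose 2 : ℤ) + ((d - t).choose 2 : ℤ))
    (((d + 1).choose 2 : ℤ) - ((t + 1).choose 2 : ℤ) - ((d - t).choose 2 : ℤ)) with
    ⟨h, -⟩ | ⟨h, -⟩ <;> rw [h] <;> omega

/-- Lemma `lem:symmetric_maxwell`. -/
theorem statement0 {V : Type*} [Fintype V] [DecidableEq V] (d t : ℕ) (hd : 1 ≤ d)
    (ht : t ≤ d - 1) (G : SimpleGraph V) [DecidableRel G.Adj] (σ : V → V)
    (hsym : IsZ2SymGraph G σ) (hcard : 2 * d ≤ Fintype.card V)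
    (hrigid : GammaRigid d G Set.univ Set.univ σ (Itd t d)) :
    (d : ℤ) * Fintype.card V -
        2 * min (((t + 1).choose 2 : ℤ) + ((d - t).choose 2 : ℤ))
          (((d + 1).choose 2 : ℤ) - ((t + 1).choose 2 : ℤ) - ((d - t).choose 2 : ℤ)) ≤
      (G.edgeFinset.card : ℤ) :=
  statement0_general d t ht G σ hsym hrigid
end

section
/- Let (G,p) be a framework in ℝ^d, and let G₁ and G₂ be subgraphs of G with V(G) = V(G₁) ∪ V(G₂). Suppose that (G_i, p|_{V(G_i)}) is infinitesimally rigid for i = 1,2, and that the affine span of p(V(G₁) ∩ V(G₂)) has dimension at least d−1. Then (G,p) is infinitesimally rigid. -/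
open Matrix

/-!
Restricting a motion `q` of `(G,p)` to `G₁` and `G₂` gives trivial motions `S₁ p + c₁` and
`S₂ p + c₂`. They agree on the overlap, so the skew-symmetric matrix `S₁ - S₂` kills the
direction space of `p(V(G₁) ∩ V(G₂))`, which has codimension at most one. A skew-symmetric
matrix with such a large kernel vanishes: `(S₁ - S₂) w` is orthogonal to the kernel and to `w`.
Hence `S₁ = S₂`, then `c₁ = c₂`, and the two trivial motions glue to one.
-/

namespace Matrix

variable {n : Type*} [Fintype n] {A : Matrix n n ℝ}

theorem mulVec_dotProduct_of_transpose_eq_neg (hA : Aᵀ = -A) (w x : n → ℝ) :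
    (A *ᵥ w) ⬝ᵥ x = -(w ⬝ᵥ (A *ᵥ x)) := by
  rw [← vecMul_transpose, ← dotProduct_mulVec, hA, neg_mulVec, dotProduct_neg]

theorem mulVec_dotProduct_self_of_transpose_eq_neg (hA : Aᵀ = -A) (w : n → ℝ) :
    (A *ᵥ w) ⬝ᵥ w = 0 := by
  have h := mulVec_dotProduct_of_transpose_eq_neg hA w w
  rw [dotProduct_comm w] at h
  linarith

theorem eq_zero_of_transpose_eq_neg_of_finrank_ker (hA : Aᵀ = -A)
    (hker : Fintype.card n - 1 ≤ Module.finrank ℝ (LinearMap.ker A.mulVecLin)) : A = 0 := by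
  set K := LinearMap.ker A.mulVecLin
  rw [ext_iff_mulVec]
  intro w
  rw [zero_mulVec]
  have horth : ∀ x ∈ K ⊔ ℝ ∙ w, (A *ᵥ w) ⬝ᵥ x = 0 := by
    intro x hx
    obtain ⟨k, hk, _, hz, rfl⟩ := Submodule.mem_sup.mp hx
    obtain ⟨c, rfl⟩ := Submodule.mem_span_singleton.mp hz
    have hAk : A *ᵥ k = 0 := hk
    rw [dotProduct_add, dotProduct_smul, mulVec_dotProduct_of_transpose_eq_neg hA, hAk,
      mulVec_dotProduct_self_of_transpose_eq_neg hA, dotProduct_zero]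
    simp
  by_cases hw : w ∈ K
  · exact hw
  have htop : K ⊔ ℝ ∙ w = ⊤ := by
    have hlt : K < K ⊔ ℝ ∙ w :=
      left_lt_sup.mpr ((Submodule.span_singleton_le_iff_mem w K).not.mpr hw)
    have hfin := Submodule.finrank_lt_finrank_of_lt hlt
    have hle := Submodule.finrank_le (K ⊔ ℝ ∙ w)
    rw [Module.finrank_fintype_fun_eq_card] at hle
    apply Submodule.eq_top_of_finrank_eq
    rw [Module.finrank_fintype_fun_eq_card]
    omega
  exact dotProduct_self_eq_zero.mp (horth _ (htop ▸ Submodule.mem_top))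

theorem skew_affine_eq_of_eqOn {P : Set (n → ℝ)} (hP : P.Nonempty)
    (hdim : Fintype.card n - 1 ≤ Module.finrank ℝ (affineSpan ℝ P).direction)
    {S₁ S₂ : Matrix n n ℝ} (hS₁ : S₁ᵀ = -S₁) (hS₂ : S₂ᵀ = -S₂) {c₁ c₂ : n → ℝ}
    (heq : Set.EqOn (fun x => S₁ *ᵥ x + c₁) (fun x => S₂ *ᵥ x + c₂) P) :
    S₁ = S₂ ∧ c₁ = c₂ := by
  have hdiff : ∀ x ∈ P, (S₁ - S₂) *ᵥ x = c₂ - c₁ := fun x hx => by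
    rw [sub_mulVec, sub_eq_sub_iff_add_eq_add, add_comm c₂]
    exact heq hx
  have hspan : vectorSpan ℝ P ≤ LinearMap.ker (S₁ - S₂).mulVecLin := by
    rw [vectorSpan_def, Submodule.span_le]
    rintro _ ⟨x, hx, y, hy, rfl⟩
    change (S₁ - S₂) *ᵥ (x - y) = 0
    rw [mulVec_sub, hdiff x hx, hdiff y hy, sub_self]
  have hskew : (S₁ - S₂)ᵀ = -(S₁ - S₂) := by
    rw [transpose_sub, hS₁, hS₂, neg_sub, neg_sub_neg]
  have hS : S₁ = S₂ := sub_eq_zero.mp <| eq_zero_of_transpose_eq_neg_of_finrank_ker hskew <|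
    hdim.trans ((direction_affineSpan ℝ P).symm ▸ Submodule.finrank_mono hspan)
  obtain ⟨x, hx⟩ := hP
  exact ⟨hS, add_left_cancel (hS ▸ heq hx)⟩

end Matrix

theorem IsMotion.subgraph {V : Type*} {d : ℕ} {G : SimpleGraph V} {p q : V → Fin d → ℝ}
    (hq : IsMotion d G Set.univ p q) (H : G.Subgraph) :
    IsMotion d H.spanningCoe H.verts p q :=
  fun u _ v _ huv => hq u trivial v trivial (H.adj_sub huv)

theorem statement1_general {V : Type*} (d : ℕ) (G : SimpleGraph V)
    (p : V → Fin d → ℝ) (H₁ H₂ : G.Subgraph) (hcover : H₁.verts ∪ H₂.verts = Set.univ)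
    (h₁ : IsInfRigid d H₁.spanningCoe H₁.verts p)
    (h₂ : IsInfRigid d H₂.spanningCoe H₂.verts p)
    (hne : (p '' (H₁.verts ∩ H₂.verts)).Nonempty)
    (hspan : d - 1 ≤
      Module.finrank ℝ (affineSpan ℝ (p '' (H₁.verts ∩ H₂.verts))).direction) :
    IsInfRigid d G Set.univ p := by
  intro q hq
  obtain ⟨S₁, c₁, hS₁, hq₁⟩ := h₁ q (hq.subgraph H₁)
  obtain ⟨S₂, c₂, hS₂, hq₂⟩ := h₂ q (hq.subgraph H₂)
  obtain ⟨rfl, rfl⟩ : S₁ = S₂ ∧ c₁ = c₂ :=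
    skew_affine_eq_of_eqOn hne (by simpa using hspan) hS₁ hS₂ <| by
      rintro _ ⟨u, hu, rfl⟩
      exact (hq₁ u hu.1).symm.trans (hq₂ u hu.2)
  refine ⟨S₁, c₁, hS₁, fun u _ => ?_⟩
  rcases hcover.symm ▸ Set.mem_univ u with hu | hu
  · exact hq₁ u hu
  · exact hq₂ u hu

/-- Gluing theorem for frameworks. -/
theorem statement1 {V : Type*} [Fintype V] [DecidableEq V] (d : ℕ) (G : SimpleGraph V)
    (p : V → Fin d → ℝ) (H₁ H₂ : G.Subgraph) (hcover : H₁.verts ∪ H₂.verts = Set.univ)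
    (h₁ : IsInfRigid d H₁.spanningCoe H₁.verts p)
    (h₂ : IsInfRigid d H₂.spanningCoe H₂.verts p)
    (hne : (p '' (H₁.verts ∩ H₂.verts)).Nonempty)
    (hspan : d - 1 ≤
      Module.finrank ℝ (affineSpan ℝ (p '' (H₁.verts ∩ H₂.verts))).direction) :
    IsInfRigid d G Set.univ p :=
  statement1_general d G p H₁ H₂ hcover h₁ h₂ hne hspan
end

section
/- Let 0 ≤ t ≤ d−1 and let γ = I_{t,d}. Suppose P is a generic set of n ≥ 1 points in ℝ^d. Then the affine span of P ∪ γ(P) has dimension exactly min{n, d−t} + min{n−1, t}. -/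
open Matrix

/-! The point group element `I_{t,d}` fixes the first `t` coordinates and negates the other
`d - t`. Relative to the base point `p₀`, the direction of the affine span of `P ∪ γ(P)` is
therefore spanned by the fixed parts of the `p_i - p₀` (`i ≥ 1`) together with the negated parts
of all `p_i`; these two families have disjoint coordinate supports, so the dimension is the sum
of the ranks of a generic `(n - 1) × t` and a generic `n × (d - t)` matrix. Each square minor of
these matrices is a polynomial in the coordinates that is nonzero, since it specializes to the
identity matrix, so it does not vanish at algebraically independent coordinates, and both
matrices have full rank. -/

open Function Finset Module Submodule

section GenericMinors

theorem indicator_range_apply_eq_one_apply {R ι κ r : Type*} [Zero R] [One R] [DecidableEq r]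
    {f : r → ι} {g : r → κ} (hf : Injective f) (hg : Injective g) (i j : r) :
    (Set.range fun k => (f k, g k)).indicator (1 : ι × κ → R) (f i, g j) =
      (1 : Matrix r r R) i j := by
  by_cases hij : i = j
  · subst hij
    rw [Set.indicator_of_mem (Set.mem_range_self i), one_apply_eq]
    rfl
  · rw [Set.indicator_of_notMem, one_apply_ne hij]
    rintro ⟨k, hk⟩
    simp only [Prod.mk.injEq] at hk
    exact hij ((hf hk.1).symm.trans (hg hk.2))

variable {R A ι κ r : Type*} [CommRing R] [CommRing A] [Algebra R A] [Fintype r] [DecidableEq r]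

theorem AlgebraicIndependent.det_map_aeval_ne_zero {σ : Type*} {x : σ → A}
    (hx : AlgebraicIndependent R x) (M : Matrix r r (MvPolynomial σ R)) (φ : σ → R)
    (hφ : (M.map (MvPolynomial.eval φ)).det ≠ 0) :
    (M.map (MvPolynomial.aeval x)).det ≠ 0 := by
  have hM : M.det ≠ 0 := fun h => hφ <| by
    rw [← RingHom.mapMatrix_apply, ← RingHom.map_det, h, map_zero]
  rw [← AlgHom.coe_toRingHom, ← RingHom.mapMatrix_apply, ← RingHom.map_det]
  exact fun h => hM (algebraicIndependent_iff.1 hx _ h)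

variable [Nontrivial R] {x : ι × κ → A} {f : r → ι} {g : r → κ}

theorem AlgebraicIndependent.det_of_apply_ne_zero (hx : AlgebraicIndependent R x)
    (hf : Injective f) (hg : Injective g) :
    (of fun i j => x (f i, g j)).det ≠ 0 := by
  convert hx.det_map_aeval_ne_zero (of fun i j => MvPolynomial.X (f i, g j))
    ((Set.range fun k => (f k, g k)).indicator 1) ?_ using 2
  · ext i j
    simp
  · convert one_ne_zero (α := R)
    convert det_one (R := R) (n := r)
    ext i j
    simp [indicator_range_apply_eq_one_apply hf hg]

theorem AlgebraicIndependent.det_of_apply_sub_apply_ne_zero (hx : AlgebraicIndependent R x)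
    (hf : Injective f) (hg : Injective g) {i₀ : ι} (hi₀ : i₀ ∉ Set.range f) :
    (of fun i j => x (f i, g j) - x (i₀, g j)).det ≠ 0 := by
  convert hx.det_map_aeval_ne_zero
    (of fun i j => MvPolynomial.X (f i, g j) - MvPolynomial.X (i₀, g j))
    ((Set.range fun k => (f k, g k)).indicator 1) ?_ using 2
  · ext i j
    simp
  · convert one_ne_zero (α := R)
    convert det_one (R := R) (n := r)
    ext i j
    have : (i₀, g j) ∉ Set.range fun k => (f k, g k) := by
      rintro ⟨k, hk⟩
      exact hi₀ ⟨k, congrArg Prod.fst hk⟩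
    simp [indicator_range_apply_eq_one_apply hf hg, Set.indicator_of_notMem this]

end GenericMinors

section CoordinateSupport

variable {K κ : Type*} [Field K]

theorem span_range_le_pi_bot {ι : Type*} {s : Set κ} {v : ι → κ → K}
    (hv : ∀ i, ∀ j ∉ s, v i j = 0) : span K (Set.range v) ≤ pi sᶜ fun _ => ⊥ :=
  span_le.2 <| by
    rintro _ ⟨i, rfl⟩
    exact mem_pi.2 fun j hj => hv i j hj

theorem disjoint_of_le_pi_bot {s : Set κ} {W₁ W₂ : Submodule K (κ → K)}
    (h₁ : W₁ ≤ pi sᶜ fun _ => ⊥) (h₂ : W₂ ≤ pi s fun _ => ⊥) : Disjoint W₁ W₂ := by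
  rw [disjoint_iff_inf_le]
  intro x ⟨hx₁, hx₂⟩
  rw [mem_bot]
  ext j
  by_cases hj : j ∈ s
  · exact mem_pi.1 (h₂ hx₂) j hj
  · exact mem_pi.1 (h₁ hx₁) j hj

theorem finrank_sup_eq_add_of_disjoint {V : Type*} [AddCommGroup V] [Module K V]
    {W₁ W₂ : Submodule K V} [FiniteDimensional K W₁] [FiniteDimensional K W₂]
    (h : Disjoint W₁ W₂) : finrank K ↥(W₁ ⊔ W₂) = finrank K W₁ + finrank K W₂ := by
  rw [← finrank_sup_add_finrank_inf_eq, h.eq_bot, finrank_bot, add_zero]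

theorem linearIndependent_of_det_ne_zero {m : Type*} [Fintype m] [DecidableEq m]
    (v : m → κ → K) (g : m → κ) (h : (of fun i j => v i (g j)).det ≠ 0) :
    LinearIndependent K v :=
  (linearIndependent_rows_iff_isUnit.2 ((isUnit_iff_isUnit_det _).2 h.isUnit)).of_comp
    (LinearMap.funLeft K K g)

variable [Fintype κ]

theorem finrank_le_card_of_le_pi_bot {s : Finset κ} {W : Submodule K (κ → K)}
    (hW : W ≤ pi (↑s)ᶜ fun _ => ⊥) : finrank K W ≤ #s := by
  have hinj : Injective ((LinearMap.funLeft K K ((↑) : s → κ)).comp W.subtype) := by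
    intro x y hxy
    ext j
    by_cases hj : j ∈ s
    · exact congrFun hxy ⟨j, hj⟩
    · rw [mem_pi.1 (hW x.2) j hj, mem_pi.1 (hW y.2) j hj]
  simpa using LinearMap.finrank_le_finrank_of_injective hinj

theorem finrank_span_eq_min_of_det_ne_zero {m : ℕ} {s : Finset κ} (v : Fin m → κ → K)
    (hv : ∀ i, ∀ j ∉ s, v i j = 0)
    (hdet : ∀ {r : ℕ} (f : Fin r → Fin m) (g : Fin r → κ), Injective f → Injective g →
      (∀ k, g k ∈ s) → (of fun i j => v (f i) (g j)).det ≠ 0) :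
    finrank K (span K (Set.range v)) = min m #s := by
  refine le_antisymm (le_min ((finrank_range_le_card v).trans_eq (Fintype.card_fin m))
    (finrank_le_card_of_le_pi_bot (span_range_le_pi_bot hv))) ?_
  set f := Fin.castLE (min_le_left m #s)
  set g : Fin (min m #s) → κ := fun k => s.equivFin.symm (Fin.castLE (min_le_right m #s) k)
  have hli := linearIndependent_of_det_ne_zero (v ∘ f) g
    (hdet f g (Fin.castLE_injective _) (Subtype.val_injective.comp
      (s.equivFin.symm.injective.comp (Fin.castLE_injective _))) fun k => Subtype.prop _)
  calc min m #s = finrank K (span K (Set.range (v ∘ f))) := by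
        rw [finrank_span_eq_card hli, Fintype.card_fin]
    _ ≤ finrank K (span K (Set.range v)) :=
        finrank_mono (span_mono (Set.range_comp_subset_range f v))

end CoordinateSupport

section Reflection

variable {K : Type*} [Field K] [CharZero K]

theorem direction_affineSpan_range_union_image_range {E : Type*} [AddCommGroup E] [Module K E]
    (γ : E →ₗ[K] E) {m : ℕ} (x : Fin (m + 1) → E) :
    (affineSpan K (Set.range x ∪ γ '' Set.range x)).direction =
      span K (Set.range fun i : Fin m => (2⁻¹ : K) • (x i.succ - x 0 + γ (x i.succ - x 0))) ⊔
        span K (Set.range fun i => (2⁻¹ : K) • (x i - γ (x i))) := by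
  set P := Set.range x ∪ γ '' Set.range x
  set A := span K (Set.range fun i : Fin m => (2⁻¹ : K) • (x i.succ - x 0 + γ (x i.succ - x 0)))
  set B := span K (Set.range fun i => (2⁻¹ : K) • (x i - γ (x i)))
  have hx : ∀ i, x i ∈ P := fun i => Or.inl ⟨i, rfl⟩
  have hγx : ∀ i, γ (x i) ∈ P := fun i => Or.inr ⟨x i, ⟨i, rfl⟩, rfl⟩
  have hA : ∀ i, (2⁻¹ : K) • (x i - x 0 + γ (x i - x 0)) ∈ A ⊔ B :=
    Fin.cases (by simp) fun i => mem_sup_left (subset_span ⟨i, rfl⟩)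
  have hB : ∀ i, (2⁻¹ : K) • (x i - γ (x i)) ∈ A ⊔ B := fun i =>
    mem_sup_right (subset_span ⟨i, rfl⟩)
  apply le_antisymm
  · rw [direction_affineSpan, vectorSpan_eq_span_vsub_set_right K (hx 0), span_le]
    rintro _ ⟨y, ⟨i, rfl⟩ | ⟨_, ⟨i, rfl⟩, rfl⟩, rfl⟩ <;>
      simp only [SetLike.mem_coe, vsub_eq_sub]
    · convert add_mem (hA i) (sub_mem (hB i) (hB 0)) using 1
      rw [map_sub]
      module
    · convert sub_mem (sub_mem (hA i) (hB i)) (hB 0) using 1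
      rw [map_sub]
      module
  · have hdir : ∀ a ∈ P, ∀ b ∈ P, a - b ∈ (affineSpan K P).direction := fun a ha b hb =>
      AffineSubspace.vsub_mem_direction (mem_affineSpan K ha) (mem_affineSpan K hb)
    refine sup_le (span_le.2 ?_) (span_le.2 ?_) <;> rintro _ ⟨i, rfl⟩ <;> rw [SetLike.mem_coe]
    · convert smul_mem _ (2⁻¹ : K) (add_mem (hdir _ (hx i.succ) _ (hx 0))
        (hdir _ (hγx i.succ) _ (hγx 0))) using 2
      rw [map_sub]
    · exact smul_mem _ _ (hdir _ (hx i) _ (hγx i))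

theorem finrank_direction_affineSpan_range_union_image_range_of_piecewise {R κ : Type*}
    [CommRing R] [Nontrivial R] [Algebra R K] [Fintype κ] [DecidableEq κ] (s : Finset κ)
    (γ : (κ → K) →ₗ[K] κ → K) (hγ : ∀ v, γ v = s.piecewise v (-v)) {m : ℕ}
    (x : Fin (m + 1) → κ → K)
    (hx : AlgebraicIndependent R fun ij : Fin (m + 1) × κ => x ij.1 ij.2) :
    finrank K (affineSpan K (Set.range x ∪ γ '' Set.range x)).direction =
      min (m + 1) #sᶜ + min m #s := by
  have hfixed : ∀ v, (2⁻¹ : K) • (v + γ v) = s.piecewise v 0 := fun v => by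
    ext j
    by_cases hj : j ∈ s <;> simp [hγ, hj, ← two_mul]
  have hnegated : ∀ v, (2⁻¹ : K) • (v - γ v) = s.piecewise (0 : κ → K) v := fun v => by
    ext j
    by_cases hj : j ∈ s <;> simp [hγ, hj, ← two_mul]
  rw [direction_affineSpan_range_union_image_range, funext fun i : Fin m => hfixed (x i.succ - x 0),
    funext fun i => hnegated (x i)]
  have hA_supp : ∀ (i : Fin m), ∀ j ∉ s, s.piecewise (x i.succ - x 0) 0 j = 0 :=
    fun i j hj => s.piecewise_eq_of_notMem _ _ hj
  have hB_supp : ∀ i, ∀ j ∉ (↑s : Set κ)ᶜ, s.piecewise (0 : κ → K) (x i) j = 0 :=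
    fun i j hj => s.piecewise_eq_of_mem _ _ (not_not.1 hj)
  have hA := finrank_span_eq_min_of_det_ne_zero _ hA_supp fun f g hf hg hgs => by
    convert hx.det_of_apply_sub_apply_ne_zero (Fin.succ_injective _ |>.comp hf) hg
      (i₀ := 0) (by simp [Fin.succ_ne_zero]) using 2
    ext i j
    simp [s.piecewise_eq_of_mem _ _ (hgs j)]
  have hB := finrank_span_eq_min_of_det_ne_zero (s := sᶜ) _
    (fun i j hj => hB_supp i j (by simpa using hj)) fun f g hf hg hgs => by
    convert hx.det_of_apply_ne_zero hf hg using 2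
    ext i j
    simp [s.piecewise_eq_of_notMem _ _ (mem_compl.1 (hgs j))]
  have hdisj := disjoint_of_le_pi_bot (span_range_le_pi_bot hA_supp)
    (compl_compl (s : Set κ) ▸ span_range_le_pi_bot hB_supp)
  rw [finrank_sup_eq_add_of_disjoint hdisj, hA, hB, add_comm]

end Reflection

theorem Itd_mulVec (t d : ℕ) (v : Fin d → ℝ) :
    Itd t d *ᵥ v = ({j | (j : ℕ) < t} : Finset (Fin d)).piecewise v (-v) := by
  ext j
  by_cases hj : (j : ℕ) < t <;> simp [Itd, mulVec_diagonal, Finset.piecewise, hj]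

theorem statement2_general (d t n : ℕ) (ht : t ≤ d - 1)
    (p : Fin n → Fin d → ℝ)
    (hgen : AlgebraicIndependent ℚ fun ij : Fin n × Fin d => p ij.1 ij.2) :
    Module.finrank ℝ
        (affineSpan ℝ (Set.range p ∪ (fun w => Itd t d *ᵥ w) '' Set.range p)).direction =
      min n (d - t) + min (n - 1) t := by
  cases n with
  | zero => simp
  | succ m =>
    have hcard : #({j | (j : ℕ) < t} : Finset (Fin d)) = t := by
      rw [Fin.card_filter_val_lt]
      omega
    have h := finrank_direction_affineSpan_range_union_image_range_of_piecewise _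
      (Itd t d).mulVecLin (Itd_mulVec t d) p hgen
    rw [coe_mulVecLin, card_compl, hcard, Fintype.card_fin] at h
    simpa using h

/-- Affine span of a generic symmetric point set. -/
theorem statement2 (d t n : ℕ) (hd : 1 ≤ d) (ht : t ≤ d - 1) (hn : 1 ≤ n)
    (p : Fin n → Fin d → ℝ)
    (hgen : AlgebraicIndependent ℚ fun ij : Fin n × Fin d => p ij.1 ij.2) :
    Module.finrank ℝ
        (affineSpan ℝ (Set.range p ∪ (fun w => Itd t d *ᵥ w) '' Set.range p)).direction =
      min n (d - t) + min (n - 1) t :=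
  statement2_general d t n ht p hgen
end

section
/- Let k ≥ 2, 0 ≤ t ≤ k, and Γ = Γ_{t,k+1}. Let G(B_k) be the graph of the (k+1)-dimensional crosspolytope with its antipodal non-adjacent vertex pairing * defined on all of V(B_k). If it is not the case that k = 2 and t = 1 (i.e. unless Γ is a rotation group of order two in ℝ³), then (G(B_k),*) is Γ-rigid in ℝ^{k+1}. -/
open Matrix

/-!
Realise the pair `(i, 0), (i, 1)` at `e_i ± e_κ` for `i < t` and at `±e_i` for `i ≥ t`, where
`κ = k` is the last coordinate; this is `Γ_{t,k+1}`-symmetric because `κ ≥ t`. Write a motion as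
`q (i, ±) = m_i ± s_i`. The four edges between the pairs `i ≠ j` give one equation for each choice
of signs, so the coefficients of `1`, `ε` and `εδ` in it vanish separately. The numbers
`d_i = s_i(κ)` for `i < t` and `d_i = s_i(i)` for `i ≥ t` then satisfy `d_i + d_j = 0` along the
edges of two cliques, one of which contains a triangle unless `(k, t) = (2, 1)`, so they all vanish;
after that the remaining equations say precisely that `q = S p + m_κ`, where the skew-symmetric `S`
maps `e_j` to `m_j - m_κ` for `j < t` and to `s_j` for `j ≥ t`.
-/

section SignedPairs

variable {n ι : Type*}

def pairSign (e : Fin 2) : ℝ := if e = 0 then 1 else -1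

@[simp] lemma pairSign_zero : pairSign 0 = 1 := rfl

@[simp] lemma pairSign_one : pairSign 1 = -1 := rfl

lemma pairSign_add_one (e : Fin 2) : pairSign (e + 1) = -pairSign e := by
  fin_cases e <;> simp [pairSign]

/-- As a function of the signs `ε, δ`, the left-hand side of `h` is
`c₀ + ε c₁ + δ c₂ + ε δ c₃`; vanishing at all four sign choices forces `c₃ = c₁ = c₀ = 0`. -/
lemma dotProduct_coeffs_eq_zero_of_forall_pairSign [Fintype n] {a b m s a' b' m' s' : n → ℝ}
    (h : ∀ e f : Fin 2, (a + pairSign e • b - (a' + pairSign f • b')) ⬝ᵥ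
      (m + pairSign e • s - (m' + pairSign f • s')) = 0) :
    b ⬝ᵥ s' + b' ⬝ᵥ s = 0 ∧ (a - a') ⬝ᵥ s + b ⬝ᵥ (m - m') = 0 ∧
      (a - a') ⬝ᵥ (m - m') + b ⬝ᵥ s + b' ⬝ᵥ s' = 0 := by
  have h00 := h 0 0
  have h01 := h 0 1
  have h10 := h 1 0
  have h11 := h 1 1
  simp only [pairSign_zero, pairSign_one, one_smul, neg_smul, add_dotProduct, dotProduct_add,
    sub_dotProduct, dotProduct_sub, neg_dotProduct, dotProduct_neg] at h00 h01 h10 h11 ⊢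
  refine ⟨?_, ?_, ?_⟩ <;> linarith

noncomputable def pairMid (q : ι × Fin 2 → n → ℝ) (i : ι) : n → ℝ :=
  (1 / 2 : ℝ) • (q (i, 0) + q (i, 1))

noncomputable def pairHalfDiff (q : ι × Fin 2 → n → ℝ) (i : ι) : n → ℝ :=
  (1 / 2 : ℝ) • (q (i, 0) - q (i, 1))

lemma pairMid_add_pairSign_smul_pairHalfDiff (q : ι × Fin 2 → n → ℝ) (x : ι × Fin 2) :
    pairMid q x.1 + pairSign x.2 • pairHalfDiff q x.1 = q x := by
  obtain ⟨i, e⟩ := x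
  fin_cases e <;>
    simp only [Fin.zero_eta, Fin.mk_one, pairSign_zero, pairSign_one, pairMid, pairHalfDiff] <;>
    module

end SignedPairs

namespace CrossPolytope

variable {k t : ℕ}

def axis (t : ℕ) (i : Fin (k + 1)) : Fin (k + 1) := if (i : ℕ) < t then Fin.last k else i

def base (t : ℕ) (i : Fin (k + 1)) : Fin (k + 1) → ℝ :=
  if (i : ℕ) < t then Pi.single i 1 else 0

def realization (t : ℕ) (x : Fin (k + 1) × Fin 2) : Fin (k + 1) → ℝ :=
  base t x.1 + pairSign x.2 • Pi.single (axis t x.1) 1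

lemma axis_of_lt {i : Fin (k + 1)} (hi : (i : ℕ) < t) : axis t i = Fin.last k := if_pos hi

lemma axis_of_not_lt {i : Fin (k + 1)} (hi : ¬ (i : ℕ) < t) : axis t i = i := if_neg hi

lemma base_dotProduct_of_lt {i : Fin (k + 1)} (hi : (i : ℕ) < t) (v : Fin (k + 1) → ℝ) :
    base t i ⬝ᵥ v = v i := by
  rw [base, if_pos hi, single_one_dotProduct]

lemma base_of_not_lt {i : Fin (k + 1)} (hi : ¬ (i : ℕ) < t) : base t i = 0 := if_neg hi

lemma not_last_lt (ht : t ≤ k) : ¬ ((Fin.last k : Fin (k + 1)) : ℕ) < t := by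
  rw [Fin.val_last]
  omega

lemma not_axis_lt (ht : t ≤ k) (i : Fin (k + 1)) : ¬ (axis t i : ℕ) < t := by
  unfold axis
  split_ifs with hi
  · exact not_last_lt ht
  · exact hi

lemma Itd_mulVec_single (j : Fin (k + 1)) :
    Itd t (k + 1) *ᵥ Pi.single j 1 = (if (j : ℕ) < t then 1 else -1 : ℝ) • Pi.single j 1 := by
  rw [Itd, diagonal_mulVec_single, mul_one, ← Pi.single_smul, smul_eq_mul, mul_one]

lemma Itd_mulVec_base (i : Fin (k + 1)) : Itd t (k + 1) *ᵥ base t i = base t i := by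
  unfold base
  split_ifs with hi
  · rw [Itd_mulVec_single, if_pos hi, one_smul]
  · exact mulVec_zero _

lemma realization_antipode (ht : t ≤ k) (x : Fin (k + 1) × Fin 2) :
    realization t (antipode k x) = Itd t (k + 1) *ᵥ realization t x := by
  rw [realization, realization, mulVec_add, mulVec_smul, Itd_mulVec_base, Itd_mulVec_single,
    if_neg (not_axis_lt ht _), antipode, pairSign_add_one, neg_one_smul, smul_neg, neg_smul]

noncomputable def rotation (t : ℕ) (q : Fin (k + 1) × Fin 2 → Fin (k + 1) → ℝ) :
    Matrix (Fin (k + 1)) (Fin (k + 1)) ℝ :=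
  of fun l j => if (j : ℕ) < t then pairMid q j l - pairMid q (Fin.last k) l else pairHalfDiff q j l

lemma rotation_mulVec_single_of_lt (q : Fin (k + 1) × Fin 2 → Fin (k + 1) → ℝ)
    {j : Fin (k + 1)} (hj : (j : ℕ) < t) :
    rotation t q *ᵥ Pi.single j 1 = pairMid q j - pairMid q (Fin.last k) := by
  ext l
  simp only [mulVec_single_one, col_apply, rotation, of_apply, if_pos hj, Pi.sub_apply]

lemma rotation_mulVec_single_of_not_lt (q : Fin (k + 1) × Fin 2 → Fin (k + 1) → ℝ)
    {j : Fin (k + 1)} (hj : ¬ (j : ℕ) < t) : rotation t q *ᵥ Pi.single j 1 = pairHalfDiff q j := by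
  ext l
  simp only [mulVec_single_one, col_apply, rotation, of_apply, if_neg hj]

section Motion

variable {q : Fin (k + 1) × Fin 2 → Fin (k + 1) → ℝ}
  (hq : IsMotion (k + 1) (crossGraph k) Set.univ (realization t) q)
include hq

lemma isMotion_coeffs_eq_zero {i j : Fin (k + 1)} (hij : i ≠ j) :
    pairHalfDiff q j (axis t i) + pairHalfDiff q i (axis t j) = 0 ∧
    (base t i - base t j) ⬝ᵥ pairHalfDiff q i + pairMid q i (axis t i)
      - pairMid q j (axis t i) = 0 ∧
    (base t i - base t j) ⬝ᵥ (pairMid q i - pairMid q j) + pairHalfDiff q i (axis t i)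
      + pairHalfDiff q j (axis t j) = 0 := by
  have h := dotProduct_coeffs_eq_zero_of_forall_pairSign (a := base t i)
    (b := Pi.single (axis t i) 1) (m := pairMid q i) (s := pairHalfDiff q i) (a' := base t j)
    (b' := Pi.single (axis t j) 1) (m' := pairMid q j) (s' := pairHalfDiff q j) fun e f => by
    have hadj : (crossGraph k).Adj (i, e) (j, f) := by
      rw [crossGraph, SimpleGraph.fromRel_adj]
      exact ⟨fun h => hij (congrArg Prod.fst h), Or.inl hij⟩
    have hedge := hq (i, e) trivial (j, f) trivial hadj
    rwa [← pairMid_add_pairSign_smul_pairHalfDiff q (i, e),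
      ← pairMid_add_pairSign_smul_pairHalfDiff q (j, f)] at hedge
  simp only [single_one_dotProduct, Pi.sub_apply] at h
  exact ⟨h.1, by linarith [h.2.1], h.2.2⟩

lemma pairHalfDiff_axis_add_of_axis_eq {i j : Fin (k + 1)} (hij : i ≠ j)
    (h : axis t i = axis t j) :
    pairHalfDiff q i (axis t i) + pairHalfDiff q j (axis t j) = 0 := by
  have hA := (isMotion_coeffs_eq_zero hq hij).1
  rw [h] at hA ⊢
  linarith

lemma pairHalfDiff_axis_add_of_not_lt {i j : Fin (k + 1)} (hij : i ≠ j) (hi : ¬ (i : ℕ) < t)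
    (hj : ¬ (j : ℕ) < t) : pairHalfDiff q i (axis t i) + pairHalfDiff q j (axis t j) = 0 := by
  have hC := (isMotion_coeffs_eq_zero hq hij).2.2
  rwa [base_of_not_lt hi, base_of_not_lt hj, sub_zero, zero_dotProduct, zero_add] at hC

/-- By the two lemmas above, `d i = pairHalfDiff q i (axis t i)` satisfies `d i + d j = 0` on the
cliques `{i < t} ∪ {κ}` and `{i ≥ t}`; unless `(k, t) = (2, 1)` one of them contains a triangle
through `κ`, and `d` vanishes on any triangle. -/
lemma pairHalfDiff_last_last_eq_zero (hk : 2 ≤ k) (ht : t ≤ k) (hkt : ¬ (k = 2 ∧ t = 1)) :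
    pairHalfDiff q (Fin.last k) (Fin.last k) = 0 := by
  have hκ := not_last_lt ht
  have hne {a b : ℕ} (ha : a < k + 1) (hb : b < k + 1) (h : a ≠ b) :
      (⟨a, ha⟩ : Fin (k + 1)) ≠ ⟨b, hb⟩ := by simpa [Fin.ext_iff] using h
  have hneκ {a : ℕ} (ha : a < k) : (⟨a, by omega⟩ : Fin (k + 1)) ≠ Fin.last k := by
    simp only [ne_eq, Fin.ext_iff, Fin.val_last]
    omega
  by_cases ht2 : 2 ≤ t
  · have h0 : ((⟨0, by omega⟩ : Fin (k + 1)) : ℕ) < t := show 0 < t by omega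
    have h1 : ((⟨1, by omega⟩ : Fin (k + 1)) : ℕ) < t := show 1 < t by omega
    have h01 := pairHalfDiff_axis_add_of_axis_eq hq (hne _ _ zero_ne_one)
      (by rw [axis_of_lt h0, axis_of_lt h1])
    have h0κ := pairHalfDiff_axis_add_of_axis_eq hq (hneκ (a := 0) (by omega))
      (by rw [axis_of_lt h0, axis_of_not_lt hκ])
    have h1κ := pairHalfDiff_axis_add_of_axis_eq hq (hneκ (a := 1) (by omega))
      (by rw [axis_of_lt h1, axis_of_not_lt hκ])
    rw [axis_of_not_lt hκ] at h0κ h1κ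
    linarith
  · have h0 : ¬ ((⟨t, by omega⟩ : Fin (k + 1)) : ℕ) < t := show ¬ t < t by omega
    have h1 : ¬ ((⟨t + 1, by omega⟩ : Fin (k + 1)) : ℕ) < t := show ¬ t + 1 < t by omega
    have h01 := pairHalfDiff_axis_add_of_not_lt hq (hne _ _ (Nat.ne_add_one t)) h0 h1
    have h0κ := pairHalfDiff_axis_add_of_not_lt hq (hneκ (a := t) (by omega)) h0 hκ
    have h1κ := pairHalfDiff_axis_add_of_not_lt hq (hneκ (a := t + 1) (by omega)) h1 hκ
    rw [axis_of_not_lt hκ] at h0κ h1κ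
    linarith

lemma pairHalfDiff_axis_eq_zero (hk : 2 ≤ k) (ht : t ≤ k) (hkt : ¬ (k = 2 ∧ t = 1))
    (i : Fin (k + 1)) : pairHalfDiff q i (axis t i) = 0 := by
  have hκ := not_last_lt ht
  have hlast := pairHalfDiff_last_last_eq_zero hq hk ht hkt
  rcases eq_or_ne i (Fin.last k) with rfl | hi
  · rwa [axis_of_not_lt hκ]
  have h : pairHalfDiff q i (axis t i) + pairHalfDiff q (Fin.last k) (axis t (Fin.last k)) = 0 := by
    by_cases hit : (i : ℕ) < t
    · exact pairHalfDiff_axis_add_of_axis_eq hq hi (by rw [axis_of_lt hit, axis_of_not_lt hκ])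
    · exact pairHalfDiff_axis_add_of_not_lt hq hi hit hκ
  rwa [axis_of_not_lt hκ, hlast, add_zero] at h

section VanishingAxisTerms

variable (hd : ∀ i, pairHalfDiff q i (axis t i) = 0)
include hd

lemma pairMid_apply_eq_diag {j : Fin (k + 1)} (hj : ¬ (j : ℕ) < t) (l : Fin (k + 1)) :
    pairMid q j l = pairMid q l l := by
  rcases eq_or_ne l j with rfl | hlj
  · rfl
  by_cases hl : (l : ℕ) < t
  · have hC := (isMotion_coeffs_eq_zero hq hlj).2.2
    rw [hd, hd, base_of_not_lt hj, sub_zero, base_dotProduct_of_lt hl, Pi.sub_apply] at hC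
    linarith
  · have hB := (isMotion_coeffs_eq_zero hq hlj).2.1
    rw [base_of_not_lt hj, base_of_not_lt hl, sub_zero, zero_dotProduct, axis_of_not_lt hl]
      at hB
    linarith

lemma pairMid_eq_pairMid_last (ht : t ≤ k) {j : Fin (k + 1)} (hj : ¬ (j : ℕ) < t) :
    pairMid q j = pairMid q (Fin.last k) :=
  funext fun l => (pairMid_apply_eq_diag hq hd hj l).trans
    (pairMid_apply_eq_diag hq hd (not_last_lt ht) l).symm

lemma pairHalfDiff_eq_pairHalfDiff_last (ht : t ≤ k) {i : Fin (k + 1)} (hi : (i : ℕ) < t) :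
    pairHalfDiff q i = pairHalfDiff q (Fin.last k) := by
  have hκ := not_last_lt ht
  have hiκ : i ≠ Fin.last k := fun h => hκ (h ▸ hi)
  funext l
  by_cases hl : (l : ℕ) < t
  · have hlκ : l ≠ Fin.last k := fun h => hκ (h ▸ hl)
    have hBi := (isMotion_coeffs_eq_zero hq hiκ).2.1
    have hBl := (isMotion_coeffs_eq_zero hq hlκ.symm).2.1
    rw [sub_dotProduct, base_dotProduct_of_lt hi, base_of_not_lt hκ, zero_dotProduct, sub_zero,
      axis_of_lt hi] at hBi
    rw [sub_dotProduct, base_dotProduct_of_lt hl, base_of_not_lt hκ, zero_dotProduct, zero_sub,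
      axis_of_not_lt hκ] at hBl
    rcases eq_or_ne i l with rfl | hil
    · linarith
    have hBil := (isMotion_coeffs_eq_zero hq hil).2.1
    rw [sub_dotProduct, base_dotProduct_of_lt hi, base_dotProduct_of_lt hl, axis_of_lt hi]
      at hBil
    linarith
  · have hil : i ≠ l := fun h => hl (h ▸ hi)
    rcases eq_or_ne l (Fin.last k) with rfl | hlκ
    · have hi0 := hd i
      have hκ0 := hd (Fin.last k)
      rw [axis_of_lt hi] at hi0
      rw [axis_of_not_lt hκ] at hκ0
      rw [hi0, hκ0]
    have hAi := (isMotion_coeffs_eq_zero hq hil).1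
    have hAκ := (isMotion_coeffs_eq_zero hq hlκ.symm).1
    rw [axis_of_lt hi, axis_of_not_lt hl] at hAi
    rw [axis_of_not_lt hκ, axis_of_not_lt hl] at hAκ
    linarith

lemma pairMid_apply_add_apply_of_lt {a b : Fin (k + 1)} (ha : (a : ℕ) < t) (hb : (b : ℕ) < t) :
    pairMid q a b + pairMid q b a = pairMid q a a + pairMid q b b := by
  rcases eq_or_ne a b with rfl | hab
  · rfl
  have hC := (isMotion_coeffs_eq_zero hq hab).2.2
  rw [hd, hd, sub_dotProduct, base_dotProduct_of_lt ha, base_dotProduct_of_lt hb, Pi.sub_apply,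
    Pi.sub_apply] at hC
  linarith

lemma pairHalfDiff_apply_of_lt_of_not_lt (ht : t ≤ k) {i j : Fin (k + 1)} (hi : (i : ℕ) < t)
    (hj : ¬ (j : ℕ) < t) : pairHalfDiff q j i = pairMid q (Fin.last k) j - pairMid q i j := by
  have hB := (isMotion_coeffs_eq_zero hq (fun h : j = i => hj (h ▸ hi))).2.1
  rw [sub_dotProduct, base_of_not_lt hj, zero_dotProduct, base_dotProduct_of_lt hi,
    axis_of_not_lt hj] at hB
  rw [← pairMid_eq_pairMid_last hq hd ht hj]
  linarith

lemma pairHalfDiff_apply_add_apply_of_not_lt {a b : Fin (k + 1)} (ha : ¬ (a : ℕ) < t)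
    (hb : ¬ (b : ℕ) < t) : pairHalfDiff q a b + pairHalfDiff q b a = 0 := by
  rcases eq_or_ne a b with rfl | hab
  · have h := hd a
    rw [axis_of_not_lt ha] at h
    rw [h, add_zero]
  · have hA := (isMotion_coeffs_eq_zero hq hab).1
    rw [axis_of_not_lt ha, axis_of_not_lt hb] at hA
    linarith

lemma rotation_transpose (ht : t ≤ k) : (rotation t q)ᵀ = -rotation t q := by
  have hdiag (i : Fin (k + 1)) : pairMid q (Fin.last k) i = pairMid q i i :=
    pairMid_apply_eq_diag hq hd (not_last_lt ht) i
  ext a b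
  rw [transpose_apply, neg_apply]
  simp only [rotation, of_apply]
  by_cases ha : (a : ℕ) < t <;> by_cases hb : (b : ℕ) < t <;> simp only [ha, hb, if_true, if_false]
  · linarith [pairMid_apply_add_apply_of_lt hq hd ha hb, hdiag a, hdiag b]
  · linarith [pairHalfDiff_apply_of_lt_of_not_lt hq hd ht ha hb]
  · linarith [pairHalfDiff_apply_of_lt_of_not_lt hq hd ht hb ha]
  · linarith [pairHalfDiff_apply_add_apply_of_not_lt hq hd ha hb]

lemma rotation_mulVec_single_axis (ht : t ≤ k) (i : Fin (k + 1)) :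
    rotation t q *ᵥ Pi.single (axis t i) 1 = pairHalfDiff q i := by
  rw [rotation_mulVec_single_of_not_lt q (not_axis_lt ht i)]
  by_cases hi : (i : ℕ) < t
  · rw [axis_of_lt hi, pairHalfDiff_eq_pairHalfDiff_last hq hd ht hi]
  · rw [axis_of_not_lt hi]

lemma rotation_mulVec_base_add (ht : t ≤ k) (i : Fin (k + 1)) :
    rotation t q *ᵥ base t i + pairMid q (Fin.last k) = pairMid q i := by
  by_cases hi : (i : ℕ) < t
  · rw [base, if_pos hi, rotation_mulVec_single_of_lt q hi, sub_add_cancel]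
  · rw [base_of_not_lt hi, mulVec_zero, zero_add, pairMid_eq_pairMid_last hq hd ht hi]

lemma eq_rotation_mulVec_realization_add (ht : t ≤ k) (x : Fin (k + 1) × Fin 2) :
    q x = rotation t q *ᵥ realization t x + pairMid q (Fin.last k) := by
  rw [realization, mulVec_add, mulVec_smul, add_right_comm, rotation_mulVec_base_add hq hd ht,
    rotation_mulVec_single_axis hq hd ht, pairMid_add_pairSign_smul_pairHalfDiff]

end VanishingAxisTerms

end Motion

end CrossPolytope

/-- `Γ`-rigidity of the crosspolytope graph. -/
theorem statement7 (k t : ℕ) (hk : 2 ≤ k) (ht : t ≤ k) (hkt : ¬ (k = 2 ∧ t = 1)) :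
    GammaRigid (k + 1) (crossGraph k) Set.univ Set.univ (antipode k)
      (Itd t (k + 1)) := by
  refine ⟨CrossPolytope.realization t, fun x _ => CrossPolytope.realization_antipode ht x,
    fun q hq => ?_⟩
  have hd := CrossPolytope.pairHalfDiff_axis_eq_zero hq hk ht hkt
  exact ⟨CrossPolytope.rotation t q, pairMid q (Fin.last k),
    CrossPolytope.rotation_transpose hq hd ht,
    fun x _ => CrossPolytope.eq_rotation_mulVec_realization_add hq hd ht x⟩
end

section
/- Let (S,*) be a nontrivial ℤ₂-irreducible k-cycle. Then either S is a simplicial k-circuit, or S = T ⊔ T* (the multiset sum of T and T*) for some nontrivial simplicial k-circuit T. Moreover, if the second alternative holds and U is a simplicial k-circuit properly contained in S, then U = T or U = T*. -/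
open Matrix

/-!
The argument only uses that simplicial cycles are closed under symmetric difference and
under `*`. If `W` is a nonempty proper subcycle of `S`, then `W Δ W*` is a `*`-invariant
subcycle; it is nonempty by irreducibility, hence equal to `S`, which forces `S = W + W*`.
For two such subcycles `U` and `W` we get `U* = S - U` and `W* = S - W`, so `U Δ W` is
again `*`-invariant: either `U = W` or `U + W = S`, i.e. `U = W*`. Hence a nonempty proper
subcycle `T` is a circuit, since a proper subcycle of `T` could only be `T*`, which has the
size of `T`. Finally, `T = {F, F}` would give `S = {F, F, F*, F*}`, and `F ∩ F*` is a
`*`-invariant face of `S`, hence empty.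
-/

open Function

namespace Multiset

variable {α : Type*} [DecidableEq α]

def symmDiff (A B : Multiset α) : Multiset α := A - B + (B - A)

theorem count_symmDiff (a : α) (A B : Multiset α) :
    count a (symmDiff A B) = count a A - count a B + (count a B - count a A) := by
  simp [symmDiff, count_sub]

theorem symmDiff_comm (A B : Multiset α) : symmDiff A B = symmDiff B A := add_comm _ _

theorem symmDiff_eq_zero_iff {A B : Multiset α} : symmDiff A B = 0 ↔ A = B := by
  refine ⟨fun h => ext.2 fun a => ?_, fun h => by simp [h, symmDiff]⟩
  have := congrArg (count a) h
  rw [count_symmDiff, count_zero] at this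
  omega

theorem symmDiff_le {A B S : Multiset α} (hA : A ≤ S) (hB : B ≤ S) : symmDiff A B ≤ S := by
  refine le_iff_count.2 fun a => ?_
  have := le_iff_count.1 hA a
  have := le_iff_count.1 hB a
  rw [count_symmDiff]
  omega

theorem add_eq_of_symmDiff_eq {A B S : Multiset α} (hA : A ≤ S) (hB : B ≤ S)
    (h : symmDiff A B = S) : A + B = S := by
  ext a
  have := le_iff_count.1 hA a
  have := le_iff_count.1 hB a
  have := congrArg (count a) h
  rw [count_symmDiff] at this
  rw [count_add]
  omega

theorem symmDiff_tsub_tsub {A B S : Multiset α} (hA : A ≤ S) (hB : B ≤ S) :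
    symmDiff (S - A) (S - B) = symmDiff A B := by
  ext a
  have := le_iff_count.1 hA a
  have := le_iff_count.1 hB a
  simp only [count_symmDiff, count_sub]
  omega

theorem symmDiff_add_inter_add_inter (A B : Multiset α) :
    symmDiff A B + (A ∩ B + A ∩ B) = A + B := by
  ext a
  simp only [count_add, count_symmDiff, count_inter]
  omega

theorem count_map_of_involutive {τ : α → α} (hτ : Involutive τ) (a : α) (A : Multiset α) :
    count a (A.map τ) = count (τ a) A := by
  conv_lhs => rw [← hτ a]
  exact count_map_eq_count' τ A hτ.injective (τ a)

theorem map_symmDiff_of_involutive {τ : α → α} (hτ : Involutive τ) (A B : Multiset α) :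
    (symmDiff A B).map τ = symmDiff (A.map τ) (B.map τ) := by
  ext a
  simp only [count_map_of_involutive hτ, count_symmDiff]

end Multiset

namespace Finset

variable {α : Type*} [DecidableEq α] {g : α → α}

theorem image_involutive (hg : Involutive g) : Involutive (Finset.image g) := fun X => by
  rw [image_image, hg.comp_self, image_id]

theorem subset_image_iff_of_involutive (hg : Involutive g) {F U : Finset α} :
    F ⊆ U.image g ↔ F.image g ⊆ U := by
  constructor
  · intro h
    simpa only [image_involutive hg _] using image_subset_image (f := g) h
  · intro h
    simpa only [image_involutive hg _] using image_subset_image (f := g) h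

end Finset

open Multiset

section Irreducible

variable {α : Type*} [DecidableEq α] {P : Multiset α → Prop} {τ : α → α} {S : Multiset α}

theorem add_map_eq_of_irreducible (hτ : Involutive τ) (hS : S.map τ = S)
    (hsymmDiff : ∀ A B, P A → P B → P (symmDiff A B)) (hmap : ∀ A, P A → P (A.map τ))
    (hirr : ∀ T ≤ S, T.map τ = T → P T → T = 0 ∨ T = S)
    {W : Multiset α} (hW : W ≤ S) (hW0 : W ≠ 0) (hWS : W ≠ S) (hPW : P W) :
    W + W.map τ = S := by
  have hWτ : W.map τ ≤ S := hS ▸ map_le_map hW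
  have hDτ : (symmDiff W (W.map τ)).map τ = symmDiff W (W.map τ) := by
    rw [map_symmDiff_of_involutive hτ, Multiset.map_map, hτ.comp_self, Multiset.map_id,
      Multiset.symmDiff_comm]
  rcases hirr _ (symmDiff_le hW hWτ) hDτ (hsymmDiff _ _ hPW (hmap W hPW)) with hD | hD
  · rcases hirr W hW (symmDiff_eq_zero_iff.1 hD).symm hPW with h | h
    exacts [absurd h hW0, absurd h hWS]
  · exact add_eq_of_symmDiff_eq hW hWτ hD

theorem eq_or_eq_map_of_irreducible (hτ : Involutive τ) (hS : S.map τ = S)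
    (hsymmDiff : ∀ A B, P A → P B → P (symmDiff A B)) (hmap : ∀ A, P A → P (A.map τ))
    (hirr : ∀ T ≤ S, T.map τ = T → P T → T = 0 ∨ T = S)
    {U W : Multiset α} (hU : U ≤ S) (hU0 : U ≠ 0) (hUS : U ≠ S) (hPU : P U)
    (hW : W ≤ S) (hW0 : W ≠ 0) (hWS : W ≠ S) (hPW : P W) :
    U = W ∨ U = W.map τ := by
  have hUτ := add_map_eq_of_irreducible hτ hS hsymmDiff hmap hirr hU hU0 hUS hPU
  have hWτ := add_map_eq_of_irreducible hτ hS hsymmDiff hmap hirr hW hW0 hWS hPW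
  have hY : (symmDiff U W).map τ = symmDiff U W := by
    rw [map_symmDiff_of_involutive hτ, eq_tsub_of_add_eq ((add_comm _ _).trans hUτ),
      eq_tsub_of_add_eq ((add_comm _ _).trans hWτ), symmDiff_tsub_tsub hU hW]
  rcases hirr _ (symmDiff_le hU hW) hY (hsymmDiff _ _ hPU hPW) with hY0 | hYS
  · exact Or.inl (symmDiff_eq_zero_iff.1 hY0)
  · refine Or.inr (add_right_cancel (b := W) ?_)
    rw [add_eq_of_symmDiff_eq hU hW hYS, ← hWτ, add_comm]

theorem not_of_lt_of_irreducible (hτ : Involutive τ) (hS : S.map τ = S)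
    (hsymmDiff : ∀ A B, P A → P B → P (symmDiff A B)) (hmap : ∀ A, P A → P (A.map τ))
    (hirr : ∀ T ≤ S, T.map τ = T → P T → T = 0 ∨ T = S)
    {T R : Multiset α} (hT : T ≤ S) (hT0 : T ≠ 0) (hTS : T ≠ S) (hPT : P T)
    (hRle : R ≤ T) (hR0 : R ≠ 0) (hRT : R ≠ T) : ¬ P R := by
  intro hPR
  have hRS : R ≠ S := by
    rintro rfl
    exact hRT (le_antisymm hRle hT)
  rcases eq_or_eq_map_of_irreducible hτ hS hsymmDiff hmap hirr (hRle.trans hT) hR0 hRS hPR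
    hT hT0 hTS hPT with rfl | rfl
  · exact hRT rfl
  · rcases hirr T hT (eq_of_le_of_card_le hRle (by simp)) hPT with h | h
    exacts [hT0 h, hTS h]

end Irreducible

section Simplicial

variable {V : Type*} [DecidableEq V] {k : ℕ}

theorem mem_complexVerts {S : Multiset (Finset V)} {U : Finset V} {v : V} (hU : U ∈ S)
    (hv : v ∈ U) : v ∈ complexVerts S :=
  Finset.mem_sup.2 ⟨U, mem_toFinset.2 hU, hv⟩

theorem IsSimplicialCycle.symmDiff {A B : Multiset (Finset V)} (hA : IsSimplicialCycle k A)
    (hB : IsSimplicialCycle k B) : IsSimplicialCycle k (symmDiff A B) := by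
  refine ⟨fun U hU => ?_, fun F ⟨hF, hodd⟩ => ?_⟩
  · rcases mem_add.1 hU with h | h
    exacts [hA.1 U (mem_of_le (Multiset.sub_le_self _ _) h),
      hB.1 U (mem_of_le (Multiset.sub_le_self _ _) h)]
  · have hAF := hA.2 F
    have hBF := hB.2 F
    simp only [inBoundary, hF, true_and] at hAF hBF
    have := congrArg (countP (F ⊆ ·)) (symmDiff_add_inter_add_inter A B)
    simp only [countP_add] at this
    omega

theorem IsSimplicialCycle.starM {g : V → V} (hg : Involutive g) {A : Multiset (Finset V)}
    (hA : IsSimplicialCycle k A) : IsSimplicialCycle k (starM g A) := by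
  refine ⟨fun _ hgU => ?_, fun F ⟨hF, hodd⟩ => hA.2 (F.image g) ⟨?_, ?_⟩⟩
  · obtain ⟨U, hU, rfl⟩ := mem_map.1 hgU
    rw [Finset.card_image_of_injective _ hg.injective]
    exact hA.1 U hU
  · rw [Finset.card_image_of_injective _ hg.injective, hF]
  · rw [_root_.starM, countP_map, ← countP_eq_card_filter] at hodd
    simpa only [Finset.subset_image_iff_of_involutive hg] using hodd

end Simplicial

section FreeInvolution

variable {V : Type*} [DecidableEq V] {S : Multiset (Finset V)} {σ : V → V}

theorem starM_congr {g : V → V} (hg : ∀ v ∈ complexVerts S, g v = σ v)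
    {T : Multiset (Finset V)} (hT : T ≤ S) : starM σ T = starM g T :=
  map_congr rfl fun _ hU =>
    Finset.image_congr fun v hv => (hg v (mem_complexVerts (mem_of_le hT hU) hv)).symm

/-- The definition only asks `σ ∘ σ = id` on `V(S)`. -/
theorem IsFreeSimplicialInvolution.exists_involutive (h : IsFreeSimplicialInvolution S σ) :
    ∃ g : V → V, Involutive g ∧ ∀ v ∈ complexVerts S, g v = σ v := by
  have hmaps : ∀ v ∈ complexVerts S, σ v ∈ complexVerts S := fun v hv => by
    obtain ⟨U, hU, hvU⟩ := Finset.mem_sup.1 hv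
    have hσU : U.image σ ∈ S := h.2.1 ▸ mem_map_of_mem _ (mem_toFinset.1 hU)
    exact mem_complexVerts hσU (Finset.mem_image_of_mem σ hvU)
  refine ⟨(complexVerts S).piecewise σ id, fun v => ?_,
    fun v hv => Finset.piecewise_eq_of_mem _ _ _ hv⟩
  by_cases hv : v ∈ complexVerts S
  · rw [Finset.piecewise_eq_of_mem _ _ _ hv, Finset.piecewise_eq_of_mem _ _ _ (hmaps v hv),
      h.1 v hv]
  · rw [Finset.piecewise_eq_of_notMem _ _ _ hv, id, Finset.piecewise_eq_of_notMem _ _ _ hv,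
      id]

/-- The face `U ∩ U*` of `U` is `σ`-invariant, so it must be empty. -/
theorem IsFreeSimplicialInvolution.disjoint_image (h : IsFreeSimplicialInvolution S σ)
    {U : Finset V} (hU : U ∈ S) : Disjoint U (U.image σ) := by
  obtain ⟨g, hg, hgσ⟩ := h.exists_involutive
  have himage : ∀ X ⊆ U, X.image σ = X.image g := fun X hX =>
    Finset.image_congr fun v hv => (hgσ v (mem_complexVerts hU (hX hv))).symm
  have hinv : (U ∩ U.image σ).image σ = U ∩ U.image σ := by
    rw [himage _ Finset.inter_subset_left, himage U subset_rfl,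
      Finset.image_inter _ _ hg.injective, Finset.image_involutive hg, Finset.inter_comm]
  rw [Finset.disjoint_iff_inter_eq_empty, ← Finset.not_nonempty_iff_eq_empty]
  exact fun hne => h.2.2 _ hne ⟨U, hU, Finset.inter_subset_left⟩ hinv

end FreeInvolution

theorem statement9_general {V : Type*} [DecidableEq V] (k : ℕ)
    (S : Multiset (Finset V)) (σ : V → V) (h : IsZ2IrreducibleCycle k S σ)
    (hnt : ¬ IsTrivialZ2Irreducible S σ) :
    IsSimplicialCircuit k S ∨
      ∃ T : Multiset (Finset V), IsSimplicialCircuit k T ∧ ¬ IsTrivialCircuit T ∧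
        S = T + starM σ T ∧
        ∀ U : Multiset (Finset V), U ≤ S → U ≠ S → IsSimplicialCircuit k U →
          U = T ∨ U = starM σ T := by
  obtain ⟨⟨hScyc, hfree⟩, hS0, hirr⟩ := h
  obtain ⟨g, hg, hgσ⟩ := hfree.exists_involutive
  have hτ := Finset.image_involutive hg
  have hSτ : S.map (Finset.image g) = S := (starM_congr hgσ le_rfl).symm.trans hfree.2.1
  have hirr' : ∀ T ≤ S, T.map (Finset.image g) = T → IsSimplicialCycle k T →
      T = 0 ∨ T = S := fun T hT hTτ hTcyc => by
      by_contra! hne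
      exact hirr T hT hne.1 hne.2 ((starM_congr hgσ hT).trans hTτ) hTcyc
  have hsymmDiff : ∀ A B : Multiset (Finset V), IsSimplicialCycle k A →
      IsSimplicialCycle k B → IsSimplicialCycle k (A.symmDiff B) :=
    fun _ _ => IsSimplicialCycle.symmDiff
  have hmap : ∀ A : Multiset (Finset V), IsSimplicialCycle k A →
      IsSimplicialCycle k (A.map (Finset.image g)) :=
    fun _ => IsSimplicialCycle.starM hg
  by_cases hcirc : IsSimplicialCircuit k S
  · exact Or.inl hcirc
  obtain ⟨T, hTS, hT0, hTne, hTcyc⟩ :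
      ∃ T ≤ S, T ≠ 0 ∧ T ≠ S ∧ IsSimplicialCycle k T := by
    simpa [IsSimplicialCircuit, hScyc, hS0] using hcirc
  have hhalf : S = T + starM σ T := by
    rw [starM_congr hgσ hTS]
    exact (add_map_eq_of_irreducible hτ hSτ hsymmDiff hmap hirr' hTS hT0 hTne hTcyc).symm
  refine Or.inr ⟨T, ⟨hTcyc, hT0, fun _ hRle hR0 hRT =>
    not_of_lt_of_irreducible hτ hSτ hsymmDiff hmap hirr' hTS hT0 hTne hTcyc hRle hR0 hRT⟩,
    ?_, hhalf, fun U hUS hUne hU => ?_⟩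
  · rintro ⟨F, rfl⟩
    exact hnt ⟨F, by simp [hhalf, starM, Multiset.cons_swap],
      hfree.disjoint_image (mem_of_le hTS (by simp))⟩
  · rw [starM_congr hgσ hTS]
    exact eq_or_eq_map_of_irreducible hτ hSτ hsymmDiff hmap hirr' hUS hU.2.1 hUne hU.1
      hTS hT0 hTne hTcyc

/-- Structure of nontrivial `ℤ₂`-irreducible `k`-cycles. -/
theorem statement9 {V : Type*} [DecidableEq V] (k : ℕ) (hk : 1 ≤ k)
    (S : Multiset (Finset V)) (σ : V → V) (h : IsZ2IrreducibleCycle k S σ)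
    (hnt : ¬ IsTrivialZ2Irreducible S σ) :
    IsSimplicialCircuit k S ∨
      ∃ T : Multiset (Finset V), IsSimplicialCircuit k T ∧ ¬ IsTrivialCircuit T ∧
        S = T + starM σ T ∧
        ∀ U : Multiset (Finset V), U ≤ S → U ≠ S → IsSimplicialCircuit k U →
          U = T ∨ U = starM σ T :=
  statement9_general k S σ h hnt
end
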